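/- arXiv:2310.10154 — 16 statements merged into one kernel-verified Lean document; each statement's English description precedes it below -/
import Mathlib

section
/- Let (G,H) be a pair of nonempty subsets of a metric space (E,σ) such that (G,H) is proximal and (G,H) has property UC. Then (G,H) has property strongly UC. -/
open Metric Filter Set

/-- Distance between two sets: `σ(G,H) = inf {σ(u,v) : u ∈ G, v ∈ H}`. -/
noncomputable def setDist {E : Type*} [MetricSpace E] (G H : Set E) : ℝ :=
  sInf (Set.image2 dist G H)

/-- The pair `(G,H)` has property UC. -/
def PropUC {E : Type*} [MetricSpace E] (G H : Set E) : Prop :=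
  ∀ u z v : ℕ → E, (∀ n, u n ∈ G) → (∀ n, z n ∈ G) → (∀ n, v n ∈ H) →
    Tendsto (fun n => dist (u n) (v n)) atTop (nhds (setDist G H)) →
    Tendsto (fun n => dist (z n) (v n)) atTop (nhds (setDist G H)) →
    Tendsto (fun n => dist (u n) (z n)) atTop (nhds 0)

/-- The pair `(G,H)` has property strongly UC. -/
def PropSUC {E : Type*} [MetricSpace E] (G H : Set E) : Prop :=
  ∀ u z v : ℕ → E, (∀ n, u n ∈ G) → (∀ n, z n ∈ G) → (∀ n, v n ∈ H) →
    Tendsto (fun n => dist (u n) (v n) - Metric.infDist (v n) G) atTop (nhds 0) →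
    Tendsto (fun n => dist (z n) (v n) - Metric.infDist (v n) G) atTop (nhds 0) →
    Tendsto (fun n => dist (u n) (z n)) atTop (nhds 0)

/-- If the pair `(G,H)` of nonempty subsets of a metric space is proximal and has
property UC, then it has property strongly UC. -/
theorem propUC_of_proximal_propSUC {E : Type*} [MetricSpace E] (G H : Set E)
    (hG : G.Nonempty) (hH : H.Nonempty)
    (hprox : (∀ u ∈ G, ∃ v ∈ H, dist u v = setDist G H) ∧
             (∀ v ∈ H, ∃ u ∈ G, dist u v = setDist G H))
    (hUC : PropUC G H) : PropSUC G H := by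
  intro u z v hu hz hv h1 h2
  have key : ∀ y ∈ H, Metric.infDist y G = setDist G H := by
    intro y hy
    obtain ⟨w, hwG, hw⟩ := hprox.2 y hy
    apply le_antisymm
    · calc Metric.infDist y G ≤ dist y w := Metric.infDist_le_dist_of_mem hwG
        _ = setDist G H := by rw [dist_comm]; exact hw
    · by_contra hc
      rw [not_le] at hc
      obtain ⟨x, hx, hxy⟩ := (Metric.infDist_lt_iff ⟨w, hwG⟩).1 hc
      have : setDist G H ≤ dist y x :=
        csInf_le ⟨0, by rintro d ⟨a, _, b, _, rfl⟩; exact dist_nonneg⟩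
          ⟨x, hx, y, hy, (dist_comm x y)⟩
      linarith
  have hsimp : ∀ n, Metric.infDist (v n) G = setDist G H := fun n => key _ (hv n)
  have h1' : Tendsto (fun n => dist (u n) (v n)) atTop (nhds (setDist G H)) := by
    have := h1.add_const (setDist G H)
    simpa [hsimp] using this
  have h2' : Tendsto (fun n => dist (z n) (v n)) atTop (nhds (setDist G H)) := by
    have := h2.add_const (setDist G H)
    simpa [hsimp] using this
  exact hUC u z v hu hz hv h1' h2'
end

section
/- Let G and H be two nonempty bounded closed convex subsets of a reflexive Banach space E. Then the pair (G₀,H₀) has property UC if and only if (G₀,H₀) has property strongly UC. -/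
open Metric Filter Set

/-- For nonempty bounded closed convex subsets `G, H` of a reflexive Banach space
(reflexivity: the canonical inclusion into the double dual is surjective), the pair
`(G₀, H₀)` has property UC if and only if it has property strongly UC. -/
theorem propUC_iff_propSUC_of_reflexive {E : Type*} [NormedAddCommGroup E]
    [NormedSpace ℝ E] [CompleteSpace E]
    (href : Function.Surjective (NormedSpace.inclusionInDoubleDual ℝ E))
    (G H : Set E) (hG : G.Nonempty) (hH : H.Nonempty)
    (hGb : Bornology.IsBounded G) (hHb : Bornology.IsBounded H)
    (hGc : IsClosed G) (hHc : IsClosed H)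
    (hGconv : Convex ℝ G) (hHconv : Convex ℝ H) :
    PropUC {u ∈ G | ∃ v ∈ H, dist u v = setDist G H}
           {v ∈ H | ∃ u ∈ G, dist u v = setDist G H} ↔
    PropSUC {u ∈ G | ∃ v ∈ H, dist u v = setDist G H}
            {v ∈ H | ∃ u ∈ G, dist u v = setDist G H} := by
  set G0 : Set E := {u ∈ G | ∃ v ∈ H, dist u v = setDist G H} with hG0
  set H0 : Set E := {v ∈ H | ∃ u ∈ G, dist u v = setDist G H} with hH0
  have hbdd : ∀ (A B : Set E), BddBelow (Set.image2 dist A B) := by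
    intro A B
    refine ⟨0, ?_⟩
    rintro _ ⟨a, _, b, _, rfl⟩
    exact dist_nonneg
  have hle : ∀ a ∈ G, ∀ b ∈ H, setDist G H ≤ dist a b := fun a ha b hb =>
    csInf_le (hbdd G H) ⟨a, ha, b, hb, rfl⟩
  have key : ∀ v ∈ H0, Metric.infDist v G0 = setDist G0 H0 := by
    rintro v ⟨hvH, u, huG, huv⟩
    have huG0 : u ∈ G0 := ⟨huG, v, hvH, huv⟩
    have hvH0 : v ∈ H0 := ⟨hvH, u, huG, huv⟩
    have hsub : setDist G0 H0 = setDist G H := by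
      apply le_antisymm
      · calc setDist G0 H0 ≤ dist u v := csInf_le (hbdd G0 H0) ⟨u, huG0, v, hvH0, rfl⟩
          _ = setDist G H := huv
      · refine le_csInf ⟨dist u v, u, huG0, v, hvH0, rfl⟩ ?_
        rintro _ ⟨a, haG0, b, hbH0, rfl⟩
        exact hle a haG0.1 b hbH0.1
    rw [hsub]
    apply le_antisymm
    · calc Metric.infDist v G0 ≤ dist v u := Metric.infDist_le_dist_of_mem huG0
        _ = setDist G H := by rw [dist_comm]; exact huv
    · rw [← hsub, ← not_lt]
      intro hlt
      obtain ⟨w, hw, hwlt⟩ := (Metric.infDist_lt_iff ⟨u, huG0⟩).1 hlt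
      rw [dist_comm] at hwlt
      exact hwlt.not_ge (csInf_le (hbdd G0 H0) ⟨w, hw, v, hvH0, rfl⟩)
  constructor
  · intro h u z v hu hz hv h1 h2
    have heq : ∀ n, Metric.infDist (v n) G0 = setDist G0 H0 := fun n => key _ (hv n)
    simp only [heq] at h1 h2
    rw [tendsto_sub_nhds_zero_iff] at h1 h2
    exact h u z v hu hz hv h1 h2
  · intro h u z v hu hz hv h1 h2
    have heq : ∀ n, Metric.infDist (v n) G0 = setDist G0 H0 := fun n => key _ (hv n)
    apply h u z v hu hz hv <;> simp only [heq] <;>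
      rw [tendsto_sub_nhds_zero_iff] <;> assumption
end

section
/- Let G and H be two nonempty subsets of a strictly convex Banach space E having the Kadec–Klee property, where G is weakly compact and convex, and H is compact. Then the pair (G,H) has property strongly UC. -/
open Metric Filter Set

theorem tendsto_dist_infDist_of_tendsto {α ι : Type*} [PseudoMetricSpace α] {l : Filter ι}
    {G : Set α} {u v : ι → α} {v₀ : α} (hu : ∀ i, u i ∈ G) (hv : Tendsto v l (nhds v₀))
    (huv : Tendsto (fun i => dist (u i) (v i) - infDist (v i) G) l (nhds 0)) :
    Tendsto (fun i => dist (u i) v₀) l (nhds (infDist v₀ G)) := by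
  have hupper : Tendsto (fun i => (dist (u i) (v i) - infDist (v i) G) + infDist (v i) G
      + dist (v i) v₀) l (nhds (infDist v₀ G)) := by
    simpa using (huv.add ((continuous_infDist_pt G).tendsto v₀ |>.comp hv)).add
      (tendsto_iff_dist_tendsto_zero.mp hv)
  refine tendsto_of_tendsto_of_tendsto_of_le_of_le tendsto_const_nhds hupper
    (fun i => ?_) (fun i => ?_)
  · rw [dist_comm]
    exact infDist_le_dist_of_mem (hu i)
  · linarith [dist_triangle (u i) (v i) v₀]

theorem isClosed_toWeakSpace_image {𝕜 E : Type*} [RCLike 𝕜] [AddCommGroup E] [Module 𝕜 E]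
    [Module ℝ E] [IsScalarTower ℝ 𝕜 E] [TopologicalSpace E] [IsTopologicalAddGroup E]
    [ContinuousSMul 𝕜 E] [LocallyConvexSpace ℝ E] {s : Set E} (hs : Convex ℝ s)
    (hcl : IsClosed s) : IsClosed (toWeakSpace 𝕜 E '' s) := by
  rw [← closure_eq_iff_isClosed, ← hs.toWeakSpace_closure 𝕜, hcl.closure_eq]

def HasKadecKleeProperty (E : Type*) [NormedAddCommGroup E] [NormedSpace ℝ E] : Prop :=
  ∀ (x : ℕ → E) (x₀ : E),
    (∀ f : E →L[ℝ] ℝ, Tendsto (fun n => f (x n)) atTop (nhds (f x₀))) →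
    Tendsto (fun n => ‖x n‖) atTop (nhds ‖x₀‖) →
    Tendsto x atTop (nhds x₀)

section NormedSpace

variable {E : Type*} [NormedAddCommGroup E] [NormedSpace ℝ E]

theorem HasKadecKleeProperty.tendsto_of_tendsto_toWeakSpace (hKK : HasKadecKleeProperty E)
    {u : ℕ → E} {p v : E}
    (hweak : Tendsto (fun n => toWeakSpace ℝ E (u n)) atTop (nhds (toWeakSpace ℝ E p)))
    (hdist : Tendsto (fun n => dist (u n) v) atTop (nhds (dist p v))) :
    Tendsto u atTop (nhds p) := by
  have hfun (f : E →L[ℝ] ℝ) : Tendsto (fun n => f (u n - v)) atTop (nhds (f (p - v))) := by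
    simp only [map_sub]
    exact (((WeakBilin.eval_continuous (topDualPairing ℝ E).flip f).tendsto _).comp
      hweak).sub_const _
  simpa using (hKK _ _ hfun (by simpa only [dist_eq_norm] using hdist)).add_const v

theorem eq_of_dist_le_infDist [StrictConvexSpace ℝ E] {G : Set E} (hG : Convex ℝ G)
    {p q v : E} (hp : p ∈ G) (hq : q ∈ G) (hpv : dist p v ≤ infDist v G)
    (hqv : dist q v ≤ infDist v G) : p = q := by
  by_contra hne
  have hmid := combo_mem_ball_of_ne (mem_closedBall.2 hpv) (mem_closedBall.2 hqv) hne
    one_half_pos one_half_pos (add_halves 1)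
  refine (mem_ball.1 hmid).not_ge ?_
  rw [dist_comm]
  exact infDist_le_dist_of_mem (hG hp hq one_half_pos.le one_half_pos.le (add_halves 1))

theorem dist_le_infDist_of_mapClusterPt {G : Set E} {u : ℕ → E} {v q : E}
    (hmin : Tendsto (fun n => dist (u n) v) atTop (nhds (infDist v G)))
    (hq : MapClusterPt (toWeakSpace ℝ E q) atTop (fun n => toWeakSpace ℝ E (u n))) :
    dist q v ≤ infDist v G := by
  refine le_of_forall_gt_imp_ge_of_dense fun r hr => ?_
  have hball : toWeakSpace ℝ E q ∈ toWeakSpace ℝ E '' closedBall v r :=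
    (isClosed_toWeakSpace_image (convex_closedBall v r) isClosed_closedBall).mem_of_mapClusterPt
      hq ((hmin.eventually_le_const hr).mono fun n hn => mem_image_of_mem _ hn)
  simpa using hball

theorem exists_tendsto_toWeakSpace_of_tendsto_dist_infDist [StrictConvexSpace ℝ E] {G : Set E}
    (hGwc : IsCompact (toWeakSpace ℝ E '' G)) (hGconv : Convex ℝ G) {u : ℕ → E}
    (hu : ∀ n, u n ∈ G) {v : E}
    (hmin : Tendsto (fun n => dist (u n) v) atTop (nhds (infDist v G))) :
    ∃ p ∈ G, dist p v = infDist v G ∧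
      Tendsto (fun n => toWeakSpace ℝ E (u n)) atTop (nhds (toWeakSpace ℝ E p)) := by
  have hmem : ∀ᶠ n in atTop, toWeakSpace ℝ E (u n) ∈ toWeakSpace ℝ E '' G :=
    Eventually.of_forall fun n => mem_image_of_mem _ (hu n)
  obtain ⟨_, ⟨p, hp, rfl⟩, hpc⟩ := hGwc (tendsto_principal.2 hmem)
  have hpv := dist_le_infDist_of_mapClusterPt hmin hpc
  refine ⟨p, hp, hpv.antisymm ?_, hGwc.tendsto_nhds_of_unique_mapClusterPt hmem ?_⟩
  · rw [dist_comm]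
    exact infDist_le_dist_of_mem hp
  · rintro _ ⟨q, hq, rfl⟩ hqc
    rw [eq_of_dist_le_infDist hGconv hq hp (dist_le_infDist_of_mapClusterPt hmin hqc) hpv]

theorem HasKadecKleeProperty.exists_tendsto_of_tendsto_dist_infDist [StrictConvexSpace ℝ E]
    (hKK : HasKadecKleeProperty E) {G : Set E} (hGwc : IsCompact (toWeakSpace ℝ E '' G))
    (hGconv : Convex ℝ G) {u : ℕ → E} (hu : ∀ n, u n ∈ G) {v : E}
    (hmin : Tendsto (fun n => dist (u n) v) atTop (nhds (infDist v G))) :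
    ∃ p ∈ G, dist p v = infDist v G ∧ Tendsto u atTop (nhds p) := by
  obtain ⟨p, hp, hpv, hweak⟩ :=
    exists_tendsto_toWeakSpace_of_tendsto_dist_infDist hGwc hGconv hu hmin
  exact ⟨p, hp, hpv, hKK.tendsto_of_tendsto_toWeakSpace hweak (hpv ▸ hmin)⟩

end NormedSpace

theorem propSUC_of_kadecKlee_general {E : Type*} [NormedAddCommGroup E] [NormedSpace ℝ E]
    [StrictConvexSpace ℝ E]
    (hKK : ∀ (x : ℕ → E) (x₀ : E),
      (∀ f : E →L[ℝ] ℝ, Tendsto (fun n => f (x n)) atTop (nhds (f x₀))) →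
      Tendsto (fun n => ‖x n‖) atTop (nhds ‖x₀‖) →
      Tendsto x atTop (nhds x₀))
    (G H : Set E)
    (hGwc : IsCompact ((toWeakSpace ℝ E) '' G)) (hGconv : Convex ℝ G)
    (hHc : IsCompact H) : PropSUC G H := by
  intro u z v hu hz hv huv hzv
  refine tendsto_of_subseq_tendsto fun ns hns => ?_
  obtain ⟨v₀, -, φ, hφ, hv₀⟩ := hHc.tendsto_subseq fun n => hv (ns n)
  have hsub := hns.comp hφ.tendsto_atTop
  have hlim (x : ℕ → E) (hx : ∀ n, x n ∈ G)
      (hxv : Tendsto (fun n => dist (x n) (v n) - infDist (v n) G) atTop (nhds 0)) :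
      ∃ p ∈ G, dist p v₀ = infDist v₀ G ∧ Tendsto (x ∘ ns ∘ φ) atTop (nhds p) :=
    HasKadecKleeProperty.exists_tendsto_of_tendsto_dist_infDist hKK hGwc hGconv (fun n => hx _)
      (tendsto_dist_infDist_of_tendsto (fun n => hx _) hv₀ (hxv.comp hsub))
  obtain ⟨p, hpG, hpv, hup⟩ := hlim u hu huv
  obtain ⟨q, hqG, hqv, hzq⟩ := hlim z hz hzv
  obtain rfl := eq_of_dist_le_infDist hGconv hpG hqG hpv.le hqv.le
  exact ⟨φ, by simpa using hup.dist hzq⟩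

/-- Let `G` and `H` be nonempty subsets of a strictly convex Banach space with the
Kadec–Klee property, where `G` is weakly compact and convex and `H` is compact.
Then `(G,H)` has property strongly UC. -/
theorem propSUC_of_kadecKlee {E : Type*} [NormedAddCommGroup E] [NormedSpace ℝ E]
    [CompleteSpace E] [StrictConvexSpace ℝ E]
    (hKK : ∀ (x : ℕ → E) (x₀ : E),
      (∀ f : E →L[ℝ] ℝ, Tendsto (fun n => f (x n)) atTop (nhds (f x₀))) →
      Tendsto (fun n => ‖x n‖) atTop (nhds ‖x₀‖) →
      Tendsto x atTop (nhds x₀))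
    (G H : Set E) (hG : G.Nonempty) (hH : H.Nonempty)
    (hGwc : IsCompact ((toWeakSpace ℝ E) '' G)) (hGconv : Convex ℝ G)
    (hHc : IsCompact H) : PropSUC G H :=
  propSUC_of_kadecKlee_general hKK G H hGwc hGconv hHc
end

section
/- Let G and H be two nonempty bounded subsets of a uniformly convex Banach space E with G convex. Then the pair (G,H) has property strongly UC. -/
open Metric Filter Set

/-!
For `u, z ∈ G` nearly nearest to `v`, the vectors `u - v` and `z - v` have norm at most
`infDist v G + δ`, while their half-sum `midpoint ℝ u z - v` has norm at least `infDist v G`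
because `G` is convex. Uniform convexity then forces `dist u z = ‖(u - v) - (z - v)‖` to be
small, uniformly as long as `infDist v G` stays bounded, which it does since `H` is bounded.
-/

section UniformConvex

variable {E : Type*} [SeminormedAddCommGroup E] [NormedSpace ℝ E] [UniformConvexSpace E]
  {ε : ℝ}

theorem exists_forall_norm_add_le_two_sub_mul (hε : 0 < ε) :
    ∃ δ, 0 < δ ∧ ∀ ⦃s : ℝ⦄ ⦃x y : E⦄, ‖x‖ ≤ s → ‖y‖ ≤ s → ε * s ≤ ‖x - y‖ →
      ‖x + y‖ ≤ (2 - δ) * s := by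
  obtain ⟨δ, hδ, h⟩ := exists_forall_closed_ball_dist_add_le_two_sub E hε
  refine ⟨δ, hδ, fun s x y hx hy hxy => ?_⟩
  obtain hs | hs := (norm_nonneg x).trans hx |>.eq_or_lt
  · subst hs
    simpa using (norm_add_le x y).trans (add_nonpos hx hy)
  have hscale : ∀ w : E, ‖s⁻¹ • w‖ = ‖w‖ / s := fun w => by
    rw [norm_smul_of_nonneg (inv_nonneg.2 hs.le), inv_mul_eq_div]
  have key := @h (s⁻¹ • x) (by rw [hscale, div_le_one hs]; exact hx)
    (s⁻¹ • y) (by rw [hscale, div_le_one hs]; exact hy)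
    (by rw [← smul_sub, hscale, le_div_iff₀ hs]; linarith)
  rwa [← smul_add, hscale, div_le_iff₀ hs] at key

theorem exists_forall_norm_add_le_two_mul_sub_of_le (hε : 0 < ε) (C : ℝ) :
    ∃ η, 0 < η ∧ ∀ ⦃s : ℝ⦄ ⦃x y : E⦄, s ≤ C → ‖x‖ ≤ s → ‖y‖ ≤ s → ε ≤ ‖x - y‖ →
      ‖x + y‖ ≤ 2 * s - η := by
  obtain hC | hC := le_or_gt C 0
  · refine ⟨1, one_pos, fun s x y hsC hx hy hxy => absurd hxy (not_le.2 ?_)⟩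
    linarith [norm_sub_le x y]
  obtain ⟨δ, hδ, h⟩ := exists_forall_norm_add_le_two_sub_mul (E := E) (div_pos hε hC)
  refine ⟨δ * (ε / 2), by positivity, fun s x y hsC hx hy hxy => ?_⟩
  have hs : ε / 2 ≤ s := by linarith [norm_sub_le x y]
  have hεs : ε / C * s ≤ ‖x - y‖ :=
    calc ε / C * s ≤ ε / C * C := by gcongr
      _ = ε := div_mul_cancel₀ ε hC.ne'
      _ ≤ ‖x - y‖ := hxy
  calc ‖x + y‖ ≤ (2 - δ) * s := h hx hy hεs
    _ ≤ 2 * s - δ * (ε / 2) := by nlinarith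

theorem Convex.exists_forall_dist_lt_of_lt_infDist_add {G : Set E} (hG : Convex ℝ G)
    (hε : 0 < ε) (C : ℝ) :
    ∃ δ, 0 < δ ∧ ∀ v : E, infDist v G ≤ C → ∀ u ∈ G, ∀ z ∈ G,
      dist u v < infDist v G + δ → dist z v < infDist v G + δ → dist u z < ε := by
  obtain ⟨η, hη, h⟩ := exists_forall_norm_add_le_two_mul_sub_of_le (E := E) hε (C + 1)
  refine ⟨min 1 (η / 4), by positivity, fun v hvC u hu z hz huv hzv => ?_⟩
  have hδ₁ : min 1 (η / 4) ≤ 1 := min_le_left _ _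
  have hδη : min 1 (η / 4) ≤ η / 4 := min_le_right _ _
  have hmid : 2 * infDist v G ≤ ‖(u - v) + (z - v)‖ := by
    have hm := infDist_le_dist_of_mem (x := v)
      (hG.segment_subset hu hz (midpoint_mem_segment u z))
    have : (u - v) + (z - v) = (2 : ℝ) • (midpoint ℝ u z - v) := by
      rw [midpoint_eq_smul_add, invOf_eq_inv]; module
    rw [this, norm_smul, Real.norm_two, ← dist_eq_norm, dist_comm]
    linarith
  by_contra! hεuz
  have := h (s := infDist v G + min 1 (η / 4)) (by linarith)
    (by rw [← dist_eq_norm]; exact huv.le) (by rw [← dist_eq_norm]; exact hzv.le)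
    (by rwa [sub_sub_sub_cancel_right, ← dist_eq_norm])
  linarith

end UniformConvex

theorem propSUC_of_uniformConvex_general {E : Type*} [NormedAddCommGroup E] [NormedSpace ℝ E]
    [UniformConvexSpace E]
    (G H : Set E)
    (hHb : Bornology.IsBounded H)
    (hGconv : Convex ℝ G) : PropSUC G H := by
  intro u z v hu hz hv hud hzd
  refine Metric.tendsto_nhds.2 fun ε hε => ?_
  have hbound : ∀ n, infDist (v n) G ≤ diam H + dist (v 0) (u 0) := fun n =>
    calc infDist (v n) G ≤ dist (v n) (u 0) := infDist_le_dist_of_mem (hu 0)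
      _ ≤ dist (v n) (v 0) + dist (v 0) (u 0) := dist_triangle _ _ _
      _ ≤ diam H + dist (v 0) (u 0) := by gcongr; exact dist_le_diam_of_mem hHb (hv n) (hv 0)
  obtain ⟨δ, hδ, hclose⟩ := hGconv.exists_forall_dist_lt_of_lt_infDist_add hε _
  filter_upwards [hud.eventually_lt_const hδ, hzd.eventually_lt_const hδ] with n hun hzn
  rw [dist_zero_right, Real.norm_of_nonneg dist_nonneg]
  exact hclose (v n) (hbound n) (u n) (hu n) (z n) (hz n) (by linarith) (by linarith)

/-- Let `G` and `H` be nonempty bounded subsets of a uniformly convex Banach space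
with `G` convex. Then `(G,H)` has property strongly UC. -/
theorem propSUC_of_uniformConvex {E : Type*} [NormedAddCommGroup E] [NormedSpace ℝ E]
    [CompleteSpace E] [UniformConvexSpace E]
    (G H : Set E) (hG : G.Nonempty) (hH : H.Nonempty)
    (hGb : Bornology.IsBounded G) (hHb : Bornology.IsBounded H)
    (hGconv : Convex ℝ G) : PropSUC G H :=
  propSUC_of_uniformConvex_general G H hHb hGconv
end

section
/- Let E be a Banach space. Suppose that for every one-dimensional compact convex subset G of the unit sphere of E (that is, every nondegenerate line segment [w₁,w₂] = {t·w₁ + (1−t)·w₂ : t ∈ [0,1]} with w₁ ≠ w₂ contained in the unit sphere), the pair (G, {0}) has property strongly UC. Then E is strictly convex. -/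
open Metric Filter Set

/-- If for every nondegenerate line segment `[w₁,w₂]` contained in the unit sphere of a
Banach space `E`, the pair `([w₁,w₂], {0})` has property strongly UC, then `E` is
strictly convex. -/
theorem strictConvex_of_propSUC_segments {E : Type*} [NormedAddCommGroup E]
    [NormedSpace ℝ E] [CompleteSpace E]
    (h : ∀ w₁ w₂ : E, w₁ ∈ Metric.sphere (0 : E) 1 → w₂ ∈ Metric.sphere (0 : E) 1 →
      w₁ ≠ w₂ → segment ℝ w₁ w₂ ⊆ Metric.sphere (0 : E) 1 →
      PropSUC (segment ℝ w₁ w₂) {(0 : E)}) :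
    StrictConvexSpace ℝ E := by
  apply StrictConvexSpace.of_norm_add_ne_two
  intro x y hx hy hne hadd
  -- the whole segment lies on the unit sphere
  have hseg : segment ℝ x y ⊆ Metric.sphere (0 : E) 1 := by
    rintro p ⟨a, b, ha, hb, hab, rfl⟩
    have h1 : ‖a • x + b • y‖ ≤ 1 := by
      calc ‖a • x + b • y‖ ≤ ‖a • x‖ + ‖b • y‖ := norm_add_le _ _
        _ = a * ‖x‖ + b * ‖y‖ := by
            rw [norm_smul, norm_smul, Real.norm_of_nonneg ha, Real.norm_of_nonneg hb]
        _ = 1 := by rw [hx, hy]; ring_nf; linarith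
    have h2 : ‖b • x + a • y‖ ≤ 1 := by
      calc ‖b • x + a • y‖ ≤ ‖b • x‖ + ‖a • y‖ := norm_add_le _ _
        _ = b * ‖x‖ + a * ‖y‖ := by
            rw [norm_smul, norm_smul, Real.norm_of_nonneg hb, Real.norm_of_nonneg ha]
        _ = 1 := by rw [hx, hy]; ring_nf; linarith
    have hsum : (a • x + b • y) + (b • x + a • y) = x + y := by
      have : (a + b) • x + (a + b) • y = x + y := by rw [hab, one_smul, one_smul]
      rw [← this]; module
    have h3 : (2 : ℝ) ≤ ‖a • x + b • y‖ + ‖b • x + a • y‖ := by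
      calc (2 : ℝ) = ‖x + y‖ := hadd.symm
        _ = ‖(a • x + b • y) + (b • x + a • y)‖ := by rw [hsum]
        _ ≤ _ := norm_add_le _ _
    have : ‖a • x + b • y‖ = 1 := by linarith
    simpa [mem_sphere_zero_iff_norm] using this
  have hsuc := h x y (by simpa [mem_sphere_zero_iff_norm] using hx)
    (by simpa [mem_sphere_zero_iff_norm] using hy) hne hseg
  have hxm : x ∈ segment ℝ x y := left_mem_segment ℝ x y
  have hym : y ∈ segment ℝ x y := right_mem_segment ℝ x y
  -- infDist 0 (segment) = 1
  have hinf : Metric.infDist (0 : E) (segment ℝ x y) = 1 := by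
    apply le_antisymm
    · calc Metric.infDist (0 : E) (segment ℝ x y) ≤ dist 0 x :=
          Metric.infDist_le_dist_of_mem hxm
        _ = 1 := by rw [dist_comm, dist_zero_right, hx]
    · rw [Metric.infDist_eq_iInf]
      have : Nonempty (segment ℝ x y) := ⟨⟨x, hxm⟩⟩
      apply le_ciInf
      intro p
      have := hseg p.2
      rw [mem_sphere_zero_iff_norm] at this
      rw [dist_comm, dist_zero_right, this]
  have hcu : Tendsto (fun _ : ℕ => dist x (0 : E) - Metric.infDist (0 : E) (segment ℝ x y))
      atTop (nhds 0) := by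
    have : dist x (0 : E) - Metric.infDist (0 : E) (segment ℝ x y) = 0 := by
      rw [dist_zero_right, hx, hinf]; ring
    simp only [this]; exact tendsto_const_nhds
  have hcz : Tendsto (fun _ : ℕ => dist y (0 : E) - Metric.infDist (0 : E) (segment ℝ x y))
      atTop (nhds 0) := by
    have : dist y (0 : E) - Metric.infDist (0 : E) (segment ℝ x y) = 0 := by
      rw [dist_zero_right, hy, hinf]; ring
    simp only [this]; exact tendsto_const_nhds
  have hconc := hsuc (fun _ => x) (fun _ => y) (fun _ => 0)
    (fun _ => hxm) (fun _ => hym) (fun _ => rfl) hcu hcz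
  have : dist x y = 0 := tendsto_nhds_unique tendsto_const_nhds hconc
  exact hne (eq_of_dist_eq_zero this)
end

section
/- Let G and H be two nonempty subsets of a metric space (E,σ) such that (G,H) has property strongly UC. Suppose {u_k} is a sequence in G and {v_k} is a sequence in H such that either lim_{k→∞} sup_{l≥k} [σ(u_l,v_k) − σ(v_k,G)] = 0, or lim_{l→∞} sup_{k≥l} [σ(u_l,v_k) − σ(v_k,G)] = 0. Then {u_k} is a Cauchy sequence. -/
open Metric Filter Set

/-- If `(G,H)` has property strongly UC, `{u_k} ⊆ G`, `{v_k} ⊆ H`, and either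
`lim_{k→∞} sup_{l ≥ k} [σ(u_l,v_k) − σ(v_k,G)] = 0` or
`lim_{l→∞} sup_{k ≥ l} [σ(u_l,v_k) − σ(v_k,G)] = 0`, then `{u_k}` is Cauchy. -/
theorem cauchy_of_propSUC {E : Type*} [MetricSpace E] (G H : Set E)
    (hG : G.Nonempty) (hH : H.Nonempty) (hSUC : PropSUC G H)
    (u v : ℕ → E) (hu : ∀ k, u k ∈ G) (hv : ∀ k, v k ∈ H)
    (h : (∀ ε > (0 : ℝ), ∃ N, ∀ k ≥ N, ∀ l ≥ k,
            dist (u l) (v k) - Metric.infDist (v k) G < ε) ∨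
         (∀ ε > (0 : ℝ), ∃ N, ∀ l ≥ N, ∀ k ≥ l,
            dist (u l) (v k) - Metric.infDist (v k) G < ε)) :
    CauchySeq u := by
  rw [Metric.cauchySeq_iff]
  by_contra hc
  push_neg at hc
  obtain ⟨ε, hε, hcon⟩ := hc
  choose a ha b hb hab using hcon
  have hnn : ∀ l k : ℕ, 0 ≤ dist (u l) (v k) - Metric.infDist (v k) G := by
    intro l k
    have := Metric.infDist_le_dist_of_mem (x := v k) (hu l)
    rw [dist_comm] at this
    linarith
  have key : ∀ m : ℕ → ℕ,
      (∀ ε' > (0:ℝ), ∃ N, ∀ n ≥ N, dist (u (a n)) (v (m n)) - Metric.infDist (v (m n)) G < ε') →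
      (∀ ε' > (0:ℝ), ∃ N, ∀ n ≥ N, dist (u (b n)) (v (m n)) - Metric.infDist (v (m n)) G < ε') →
      False := by
    intro m h1 h2
    have t1 : Tendsto (fun n => dist (u (a n)) (v (m n)) - Metric.infDist (v (m n)) G)
        atTop (nhds 0) := by
      rw [Metric.tendsto_atTop]
      intro ε' hε'
      obtain ⟨N, hN⟩ := h1 ε' hε'
      exact ⟨N, fun n hn => by
        rw [Real.dist_eq, sub_zero, abs_of_nonneg (hnn _ _)]; exact hN n hn⟩
    have t2 : Tendsto (fun n => dist (u (b n)) (v (m n)) - Metric.infDist (v (m n)) G)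
        atTop (nhds 0) := by
      rw [Metric.tendsto_atTop]
      intro ε' hε'
      obtain ⟨N, hN⟩ := h2 ε' hε'
      exact ⟨N, fun n hn => by
        rw [Real.dist_eq, sub_zero, abs_of_nonneg (hnn _ _)]; exact hN n hn⟩
    have := hSUC (fun n => u (a n)) (fun n => u (b n)) (fun n => v (m n))
      (fun n => hu _) (fun n => hu _) (fun n => hv _) t1 t2
    rw [Metric.tendsto_atTop] at this
    obtain ⟨N, hN⟩ := this ε hε
    have h1 := hN N le_rfl
    rw [Real.dist_eq, sub_zero, abs_of_nonneg dist_nonneg] at h1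
    exact absurd (hab N) (not_le.2 h1)
  rcases h with h | h
  · refine key (fun n => n) ?_ ?_
    · intro ε' hε'
      obtain ⟨N, hN⟩ := h ε' hε'
      exact ⟨N, fun n hn => hN n hn (a n) (ha n)⟩
    · intro ε' hε'
      obtain ⟨N, hN⟩ := h ε' hε'
      exact ⟨N, fun n hn => hN n hn (b n) (hb n)⟩
  · refine key (fun n => max (a n) (b n)) ?_ ?_
    · intro ε' hε'
      obtain ⟨N, hN⟩ := h ε' hε'
      exact ⟨N, fun n hn => hN (a n) (le_trans hn (ha n)) _ (le_max_left _ _)⟩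
    · intro ε' hε'
      obtain ⟨N, hN⟩ := h ε' hε'
      exact ⟨N, fun n hn => hN (b n) (le_trans hn (hb n)) _ (le_max_right _ _)⟩
end

section
/- Let G and H be two nonempty bounded subsets of a metric space (E,σ) and let T be an almost cyclic ψ-contraction on G ∪ H. Fix u₀ ∈ G and define u_{n+1} = T u_n for n ≥ 0. If the sequence {u_{2n}} has a subsequence converging to a point z ∈ G, then z is a best approximation for T in G, i.e. σ(z,Tz) = σ(Tz,G); in particular T has a best approximation in G. -/
open Metric Filter Set

/-- `ψ : [0,∞) → [0,∞)` is strictly increasing and continuous. -/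
structure PsiMap (ψ : ℝ → ℝ) : Prop where
  nonneg : ∀ t, 0 ≤ t → 0 ≤ ψ t
  strictMono : StrictMonoOn ψ (Set.Ici 0)
  continuous : ContinuousOn ψ (Set.Ici 0)

/-- `T` is an almost cyclic `ψ`-contraction on `G ∪ H`: it is cyclic and
`σ(Tx,Ty) ≤ σ(x,y) − ψ(σ(x,y)) + ψ(σ(y,G))` for all `x ∈ G`, `y ∈ H`. -/
def AlmostCyclicPsiContraction {E : Type*} [MetricSpace E] (G H : Set E) (T : E → E)
    (ψ : ℝ → ℝ) : Prop :=
  Set.MapsTo T G H ∧ Set.MapsTo T H G ∧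
    ∀ x ∈ G, ∀ y ∈ H,
      dist (T x) (T y) ≤ dist x y - ψ (dist x y) + ψ (Metric.infDist y G)

/-- If `T` is an almost cyclic ψ-contraction on `G ∪ H` with `G, H` nonempty and
bounded, `u₀ ∈ G`, `u_{n+1} = T u_n`, and `{u_{2n}}` has a subsequence converging to
some `z ∈ G`, then `z` is a best approximation for `T` in `G`. -/
theorem bestApprox_of_convergent_subsequence {E : Type*} [MetricSpace E]
    (G H : Set E) (hG : G.Nonempty) (hH : H.Nonempty)
    (hGb : Bornology.IsBounded G) (hHb : Bornology.IsBounded H)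
    (ψ : ℝ → ℝ) (hψ : PsiMap ψ) (T : E → E)
    (hT : AlmostCyclicPsiContraction G H T ψ)
    (u : ℕ → E) (hu0 : u 0 ∈ G) (hrec : ∀ n, u (n + 1) = T (u n))
    (z : E) (hz : z ∈ G) (φ : ℕ → ℕ) (hφ : StrictMono φ)
    (hconv : Tendsto (fun k => u (2 * φ k)) atTop (nhds z)) :
    dist z (T z) = Metric.infDist (T z) G := by
  obtain ⟨hTGH, hTHG, hC⟩ := hT
  -- memberships of even/odd iterates
  have hmem : ∀ n, u (2*n) ∈ G ∧ u (2*n+1) ∈ H := by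
    intro n
    induction n with
    | zero =>
      refine ⟨hu0, ?_⟩
      rw [show 2*0+1 = 0+1 from rfl, hrec]
      exact hTGH hu0
    | succ m ih =>
      have h1 : u (2*(m+1)) ∈ G := by
        rw [show 2*(m+1) = (2*m+1)+1 by ring, hrec]
        exact hTHG ih.2
      refine ⟨h1, ?_⟩
      rw [show 2*(m+1)+1 = (2*(m+1))+1 from rfl, hrec]
      exact hTGH h1
  have hG' : ∀ n, Even n → u n ∈ G := by
    rintro n ⟨m, hm⟩
    have := (hmem m).1
    rwa [show 2*m = n by omega] at this
  have hH' : ∀ n, ¬ Even n → u n ∈ H := by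
    intro n hn
    rcases Nat.even_or_odd n with h | ⟨m, hm⟩
    · exact absurd h hn
    have := (hmem m).2
    rwa [show 2*m+1 = n by omega] at this
  set d : ℕ → ℝ := fun n => dist (u n) (u (n+1)) with hd
  have hmono : MonotoneOn ψ (Set.Ici 0) := hψ.strictMono.monotoneOn
  -- T is nonexpansive across G, H
  have hkey : ∀ x ∈ G, ∀ y ∈ H, dist (T x) (T y) ≤ dist x y := by
    intro x hx y hy
    have h1 := hC x hx y hy
    have h2 : Metric.infDist y G ≤ dist x y := by
      rw [dist_comm]; exact Metric.infDist_le_dist_of_mem hx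
    have h3 : ψ (Metric.infDist y G) ≤ ψ (dist x y) :=
      hmono Metric.infDist_nonneg dist_nonneg h2
    linarith
  have hanti : ∀ n, d (n+1) ≤ d n := by
    intro n
    show dist (u (n+1)) (u (n+2)) ≤ dist (u n) (u (n+1))
    rw [show n+2 = (n+1)+1 from rfl, hrec (n+1), hrec n]
    by_cases hn : Even n
    · exact hkey _ (hG' n hn) _ (by rw [← hrec n]; exact hH' (n+1) (by simp [Nat.even_add_one, hn]))
    · rw [dist_comm (T (u n)) (T (T (u n))), dist_comm (u n) (T (u n))]
      exact hkey _ (by rw [← hrec n]; exact hG' (n+1) (by simp [Nat.even_add_one, hn])) _ (hH' n hn)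
  have hdnn : ∀ n, 0 ≤ d n := fun n => dist_nonneg
  have hAnti : Antitone d := antitone_nat_of_succ_le hanti
  have hbdd : BddBelow (Set.range d) := ⟨0, by rintro x ⟨n, rfl⟩; exact hdnn n⟩
  set r := ⨅ n, d n with hrdef
  have hrlim : Tendsto d atTop (nhds r) := tendsto_atTop_ciInf hAnti hbdd
  have hr0 : 0 ≤ r := le_ciInf hdnn
  -- psi composed with convergent nonneg sequences
  have hpsi_cont : ∀ (f : ℕ → ℝ) (a : ℝ), 0 ≤ a → (∀ n, 0 ≤ f n) →
      Tendsto f atTop (nhds a) → Tendsto (fun n => ψ (f n)) atTop (nhds (ψ a)) := by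
    intro f a ha hf hfa
    have hc : ContinuousWithinAt ψ (Set.Ici 0) a := hψ.continuous a (Set.mem_Ici.mpr ha)
    exact hc.tendsto.comp
      (tendsto_nhdsWithin_of_tendsto_nhds_of_eventually_within f hfa
        (Eventually.of_forall fun n => Set.mem_Ici.mpr (hf n)))
  have h2n : Tendsto (fun n : ℕ => 2*n) atTop atTop :=
    StrictMono.tendsto_atTop (fun a b h => by omega)
  have hd2 : Tendsto (fun n => d (2*n)) atTop (nhds r) := hrlim.comp h2n
  have hd21 : Tendsto (fun n => d (2*n+1)) atTop (nhds r) :=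
    hrlim.comp (StrictMono.tendsto_atTop (fun a b h => by omega))
  set e : ℕ → ℝ := fun n => Metric.infDist (u (2*n+1)) G with he
  have he_nonneg : ∀ n, 0 ≤ e n := fun n => Metric.infDist_nonneg
  have he_le : ∀ n, e n ≤ d (2*n) := by
    intro n
    have := Metric.infDist_le_dist_of_mem (x := u (2*n+1)) (hmem n).1
    calc e n ≤ dist (u (2*n+1)) (u (2*n)) := this
    _ = d (2*n) := dist_comm _ _
  have hcontr : ∀ n, d (2*n+1) ≤ d (2*n) - ψ (d (2*n)) + ψ (e n) := by
    intro n
    have h1 := hC (u (2*n)) (hmem n).1 (u (2*n+1)) (hmem n).2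
    rw [← hrec (2*n)] at h1
    rw [← hrec (2*n+1)] at h1
    exact h1
  have hψd : Tendsto (fun n => ψ (d (2*n))) atTop (nhds (ψ r)) :=
    hpsi_cont _ _ hr0 (fun n => hdnn _) hd2
  have hsq0 : Tendsto (fun n => ψ (d (2*n)) - ψ (e n)) atTop (nhds 0) := by
    have hub : ∀ n, ψ (d (2*n)) - ψ (e n) ≤ d (2*n) - d (2*n+1) := by
      intro n; have := hcontr n; linarith
    have hlb : ∀ n, 0 ≤ ψ (d (2*n)) - ψ (e n) := by
      intro n
      have := hmono (Set.mem_Ici.mpr (he_nonneg n)) (Set.mem_Ici.mpr (hdnn (2*n))) (he_le n)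
      linarith
    have hdiff : Tendsto (fun n => d (2*n) - d (2*n+1)) atTop (nhds 0) := by
      have := hd2.sub hd21; simpa using this
    exact squeeze_zero hlb hub hdiff
  have hψe : Tendsto (fun n => ψ (e n)) atTop (nhds (ψ r)) := by
    have := hψd.sub hsq0
    simp only [sub_sub_cancel] at this
    simpa using this
  -- eventual lower bound on e
  have helow : ∀ ε : ℝ, 0 < ε → ∀ᶠ n in atTop, r - ε ≤ e n := by
    intro ε hε
    rcases le_or_gt r ε with h | h
    · exact Eventually.of_forall fun n => le_trans (by linarith) (he_nonneg n)
    · have hre : (0:ℝ) ≤ r - ε := by linarith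
      have hlt : ψ (r - ε) < ψ r :=
        hψ.strictMono (Set.mem_Ici.mpr hre) (Set.mem_Ici.mpr hr0) (by linarith)
      filter_upwards [hψe.eventually (eventually_gt_nhds hlt)] with n hn
      by_contra hcon
      push_neg at hcon
      have := hmono (Set.mem_Ici.mpr (he_nonneg n)) (Set.mem_Ici.mpr hre) (le_of_lt hcon)
      linarith
  set s := dist z (T z) with hs
  set δ := Metric.infDist (T z) G with hδ
  have hTz : T z ∈ H := hTGH hz
  have hT2z : T (T z) ∈ G := hTHG hTz
  set a : ℕ → ℝ := fun k => dist (u (2*φ k)) (T z) with ha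
  have haconv : Tendsto a atTop (nhds s) := hconv.dist tendsto_const_nhds
  have hψa : Tendsto (fun k => ψ (a k)) atTop (nhds (ψ s)) :=
    hpsi_cont _ _ dist_nonneg (fun n => dist_nonneg) haconv
  have hEk : ∀ k, e (φ k) ≤ a k - ψ (a k) + ψ δ := by
    intro k
    have h1 := hC (u (2*φ k)) (hmem (φ k)).1 (T z) hTz
    rw [← hrec (2*φ k)] at h1
    have h2 : e (φ k) ≤ dist (u (2*φ k + 1)) (T (T z)) :=
      Metric.infDist_le_dist_of_mem hT2z
    exact le_trans h2 h1
  have hF : Tendsto (fun k => a k - ψ (a k) + ψ δ) atTop (nhds (s - ψ s + ψ δ)) :=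
    (haconv.sub hψa).add tendsto_const_nhds
  have hrL : r ≤ s - ψ s + ψ δ := by
    by_contra hcon
    push_neg at hcon
    set ε := (r - (s - ψ s + ψ δ))/2 with hεdef
    have hε : 0 < ε := by simp only [hεdef]; linarith
    have h1 : ∀ᶠ k in atTop, r - ε ≤ e (φ k) := hφ.tendsto_atTop.eventually (helow ε hε)
    have h2 : ∀ᶠ k in atTop, r - ε ≤ a k - ψ (a k) + ψ δ := by
      filter_upwards [h1] with k hk
      exact le_trans hk (hEk k)
    have := ge_of_tendsto hF h2
    simp only [hεdef] at this
    linarith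
  -- s ≤ r
  have hstep2 : ∀ j, dist (T z) (u (2*j+2)) ≤ dist z (u (2*j+2)) + d (2*j+1) := by
    intro j
    have h1 : dist (T z) (u (2*j+2)) ≤ dist z (u (2*j+1)) := by
      rw [show 2*j+2 = (2*j+1)+1 from rfl, hrec]
      exact hkey z hz _ (hH' (2*j+1) (by simp [Nat.even_add_one, parity_simps]))
    have h2 : dist z (u (2*j+1)) ≤ dist z (u (2*j+2)) + dist (u (2*j+2)) (u (2*j+1)) :=
      dist_triangle _ _ _
    have h3 : dist (u (2*j+2)) (u (2*j+1)) = d (2*j+1) := dist_comm _ _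
    linarith
  have hzconv : Tendsto (fun k => dist z (u (2*φ k))) atTop (nhds 0) := by
    have := tendsto_const_nhds (x := z) (f := atTop (α := ℕ)) |>.dist hconv
    simpa using this
  have hdφ : Tendsto (fun k => d (2*φ k - 1)) atTop (nhds r) := by
    refine hrlim.comp (tendsto_atTop_mono (fun k => ?_) tendsto_id)
    simp only [id_eq]
    have : k ≤ φ k := hφ.le_apply
    omega
  have hsr : s ≤ r := by
    have hfg : ∀ᶠ k in atTop, a k ≤ dist z (u (2*φ k)) + d (2*φ k - 1) := by
      filter_upwards [eventually_ge_atTop 1] with k hk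
      have hφk : 1 ≤ φ k := le_trans hk (hφ.le_apply : k ≤ φ k)
      obtain ⟨j, hj⟩ : ∃ j, φ k = j + 1 := ⟨φ k - 1, by omega⟩
      have e1 : 2*φ k = 2*j+2 := by omega
      have e2 : 2*φ k - 1 = 2*j+1 := by omega
      rw [e2, e1]
      calc a k = dist (T z) (u (2*j+2)) := by simp only [ha]; rw [e1, dist_comm]
      _ ≤ dist z (u (2*j+2)) + d (2*j+1) := hstep2 j
    have := le_of_tendsto_of_tendsto haconv (hzconv.add hdφ) hfg
    simpa using this
  have hδs : δ ≤ s := by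
    rw [hδ, hs, dist_comm]
    exact Metric.infDist_le_dist_of_mem hz
  have hψsδ : ψ s ≤ ψ δ := by linarith
  have hsδ : s ≤ δ := by
    by_contra hlt
    push_neg at hlt
    have := hψ.strictMono (Set.mem_Ici.mpr Metric.infDist_nonneg)
      (Set.mem_Ici.mpr dist_nonneg) hlt
    linarith
  linarith
end

section
/- Let G and H be nonempty subsets of a metric space (E,σ) and let T be an almost cyclic ψ-contraction on G ∪ H. Fix u₀ ∈ G and define u_{n+1} = T u_n for n ≥ 0. Then σ(u_{2n+2}, u_{2n+1}) − σ(u_{2n+1}, G) → 0 and σ(u_{2n}, u_{2n+1}) − σ(u_{2n+1}, G) → 0 as n → ∞. -/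
open Metric Filter Set

lemma psi_comp_tendsto {ψ : ℝ → ℝ} (hψ : PsiMap ψ) {x : ℕ → ℝ} {r : ℝ}
    (hx : ∀ n, 0 ≤ x n) (hr : 0 ≤ r) (h : Tendsto x atTop (nhds r)) :
    Tendsto (fun n => ψ (x n)) atTop (nhds (ψ r)) := by
  have hc : ContinuousWithinAt ψ (Set.Ici 0) r := hψ.continuous r hr
  exact hc.tendsto.comp (tendsto_nhdsWithin_iff.mpr ⟨h, Eventually.of_forall hx⟩)

lemma psi_tendsto_rev {ψ : ℝ → ℝ} (hψ : PsiMap ψ) {x : ℕ → ℝ} {r : ℝ}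
    (hx : ∀ n, 0 ≤ x n) (hr : 0 ≤ r)
    (h : Tendsto (fun n => ψ (x n)) atTop (nhds (ψ r))) :
    Tendsto x atTop (nhds r) := by
  rw [tendsto_order]
  constructor
  · intro a ha
    rcases lt_or_ge a 0 with h0 | h0
    · exact Eventually.of_forall fun n => h0.trans_le (hx n)
    · have hlt : ψ a < ψ r := hψ.strictMono h0 hr ha
      filter_upwards [h.eventually (eventually_gt_nhds hlt)] with n hn
      by_contra hc
      push_neg at hc
      exact hn.not_ge (hψ.strictMono.monotoneOn (hx n) h0 hc)
  · intro a ha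
    have h0 : 0 ≤ a := hr.trans ha.le
    have hlt : ψ r < ψ a := hψ.strictMono hr h0 ha
    filter_upwards [h.eventually (eventually_lt_nhds hlt)] with n hn
    by_contra hc
    push_neg at hc
    exact hn.not_ge (hψ.strictMono.monotoneOn h0 (hx n) hc)

/-- If `T` is an almost cyclic ψ-contraction on `G ∪ H`, `u₀ ∈ G` and
`u_{n+1} = T u_n`, then `σ(u_{2n+2},u_{2n+1}) − σ(u_{2n+1},G) → 0` and
`σ(u_{2n},u_{2n+1}) − σ(u_{2n+1},G) → 0`. -/
theorem approximation_lemma {E : Type*} [MetricSpace E]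
    (G H : Set E) (hG : G.Nonempty) (hH : H.Nonempty)
    (ψ : ℝ → ℝ) (hψ : PsiMap ψ) (T : E → E)
    (hT : AlmostCyclicPsiContraction G H T ψ)
    (u : ℕ → E) (hu0 : u 0 ∈ G) (hrec : ∀ n, u (n + 1) = T (u n)) :
    Tendsto (fun n => dist (u (2 * n + 2)) (u (2 * n + 1)) -
        Metric.infDist (u (2 * n + 1)) G) atTop (nhds 0) ∧
    Tendsto (fun n => dist (u (2 * n)) (u (2 * n + 1)) -
        Metric.infDist (u (2 * n + 1)) G) atTop (nhds 0) := by
  obtain ⟨hTGH, hTHG, hcontr⟩ := hT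
  -- membership of the orbit
  have hmem : ∀ n, u (2 * n) ∈ G ∧ u (2 * n + 1) ∈ H := by
    intro n
    induction n with
    | zero =>
      refine ⟨hu0, ?_⟩
      rw [show 2 * 0 + 1 = 0 + 1 by rfl, hrec]
      exact hTGH hu0
    | succ n ih =>
      have h1 : u (2 * (n + 1)) ∈ G := by
        rw [show 2 * (n + 1) = (2 * n + 1) + 1 by ring, hrec]
        exact hTHG ih.2
      refine ⟨h1, ?_⟩
      rw [show 2 * (n + 1) + 1 = 2 * (n + 1) + 1 by rfl, hrec]
      exact hTGH h1
  set D : ℕ → ℝ := fun n => dist (u n) (u (n + 1)) with hD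
  set p : ℕ → ℝ := fun n => Metric.infDist (u n) G with hp
  have hDnn : ∀ n, 0 ≤ D n := fun n => dist_nonneg
  have hpnn : ∀ n, 0 ≤ p n := fun n => Metric.infDist_nonneg
  -- the two key contraction inequalities
  have key1 : ∀ n, D (2 * n + 1) ≤ D (2 * n) - ψ (D (2 * n)) + ψ (p (2 * n + 1)) := by
    intro n
    have h := hcontr (u (2 * n)) (hmem n).1 (u (2 * n + 1)) (hmem n).2
    rw [← hrec (2 * n), ← hrec (2 * n + 1)] at h
    simpa [hD, hp] using h
  have key2 : ∀ n, D (2 * n + 2) ≤ D (2 * n + 1) - ψ (D (2 * n + 1)) + ψ (p (2 * n + 1)) := by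
    intro n
    have hG2 : u (2 * n + 2) ∈ G := by
      have := (hmem (n + 1)).1
      rwa [show 2 * (n + 1) = 2 * n + 2 by ring] at this
    have h := hcontr (u (2 * n + 2)) hG2 (u (2 * n + 1)) (hmem n).2
    rw [← hrec (2 * n + 2), ← hrec (2 * n + 1)] at h
    have e : dist (u (2 * n + 3)) (u (2 * n + 2)) = D (2 * n + 2) := dist_comm _ _
    have e2 : dist (u (2 * n + 2)) (u (2 * n + 1)) = D (2 * n + 1) := dist_comm _ _
    calc D (2 * n + 2) = dist (u (2 * n + 3)) (u (2 * n + 2)) := e.symm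
      _ ≤ dist (u (2 * n + 2)) (u (2 * n + 1)) - ψ (dist (u (2 * n + 2)) (u (2 * n + 1)))
          + ψ (Metric.infDist (u (2 * n + 1)) G) := h
      _ = D (2 * n + 1) - ψ (D (2 * n + 1)) + ψ (p (2 * n + 1)) := by rw [e2]
  -- bounds on p
  have hpD1 : ∀ n, p (2 * n + 1) ≤ D (2 * n) := by
    intro n
    have := Metric.infDist_le_dist_of_mem (x := u (2 * n + 1)) (hmem n).1
    simpa [hp, hD, dist_comm] using this
  have hpD2 : ∀ n, p (2 * n + 1) ≤ D (2 * n + 1) := by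
    intro n
    have hG2 : u (2 * n + 2) ∈ G := by
      have := (hmem (n + 1)).1
      rwa [show 2 * (n + 1) = 2 * n + 2 by ring] at this
    exact Metric.infDist_le_dist_of_mem (x := u (2 * n + 1)) hG2
  -- D is antitone
  have hmono : ∀ n, D (n + 1) ≤ D n := by
    intro n
    rcases Nat.even_or_odd n with ⟨m, hm⟩ | ⟨m, hm⟩
    · subst hm
      have h := key1 m
      have hψle : ψ (p (2 * m + 1)) ≤ ψ (D (2 * m)) :=
        hψ.strictMono.monotoneOn (hpnn _) (hDnn _) (hpD1 m)
      have : D (2 * m + 1) ≤ D (2 * m) - ψ (D (2 * m)) + ψ (D (2 * m)) :=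
        h.trans (by linarith)
      simpa [two_mul] using this
    · subst hm
      have h := key2 m
      have hψle : ψ (p (2 * m + 1)) ≤ ψ (D (2 * m + 1)) :=
        hψ.strictMono.monotoneOn (hpnn _) (hDnn _) (hpD2 m)
      have : D (2 * m + 2) ≤ D (2 * m + 1) - ψ (D (2 * m + 1)) + ψ (D (2 * m + 1)) :=
        h.trans (by linarith)
      simpa [show 2 * m + 1 + 1 = 2 * m + 2 by ring] using this
  have hanti : Antitone D := antitone_nat_of_succ_le hmono
  have hbdd : BddBelow (Set.range D) := ⟨0, by rintro x ⟨n, rfl⟩; exact hDnn n⟩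
  set r : ℝ := ⨅ n, D n with hrdef
  have hconv : Tendsto D atTop (nhds r) := tendsto_atTop_ciInf hanti hbdd
  have hr0 : 0 ≤ r := le_ciInf hDnn
  -- subsequences
  have h2 : Tendsto (fun n => 2 * n) atTop (atTop : Filter ℕ) :=
    tendsto_atTop_atTop.mpr fun b => ⟨b, fun a ha => by omega⟩
  have h2p1 : Tendsto (fun n => 2 * n + 1) atTop (atTop : Filter ℕ) :=
    tendsto_atTop_atTop.mpr fun b => ⟨b, fun a ha => by omega⟩
  have hD2 : Tendsto (fun n => D (2 * n)) atTop (nhds r) := hconv.comp h2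
  have hD2p1 : Tendsto (fun n => D (2 * n + 1)) atTop (nhds r) := hconv.comp h2p1
  -- ψ composed limits
  have hψD2 : Tendsto (fun n => ψ (D (2 * n))) atTop (nhds (ψ r)) :=
    psi_comp_tendsto hψ (fun n => hDnn _) hr0 hD2
  have hψD2p1 : Tendsto (fun n => ψ (D (2 * n + 1))) atTop (nhds (ψ r)) :=
    psi_comp_tendsto hψ (fun n => hDnn _) hr0 hD2p1
  -- squeeze ψ(p(2n+1)) → ψ r
  have hlow : Tendsto (fun n => ψ (D (2 * n)) - (D (2 * n) - D (2 * n + 1)))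
      atTop (nhds (ψ r)) := by
    have := hψD2.sub (hD2.sub hD2p1)
    simpa using this
  have hψp : Tendsto (fun n => ψ (p (2 * n + 1))) atTop (nhds (ψ r)) := by
    refine tendsto_of_tendsto_of_tendsto_of_le_of_le hlow hψD2p1 ?_ ?_
    · intro n
      have := key1 n
      dsimp only
      linarith
    · intro n
      dsimp only
      exact hψ.strictMono.monotoneOn (hpnn _) (hDnn _) (hpD2 n)
  have hpconv : Tendsto (fun n => p (2 * n + 1)) atTop (nhds r) :=
    psi_tendsto_rev hψ (fun n => hpnn _) hr0 hψp
  constructor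
  · have h1 : Tendsto (fun n => D (2 * n + 1) - p (2 * n + 1)) atTop (nhds (r - r)) :=
      hD2p1.sub hpconv
    rw [sub_self] at h1
    refine h1.congr fun n => ?_
    simp only [hD, hp]
    rw [show 2 * n + 1 + 1 = 2 * n + 2 by ring, dist_comm]
  · have h1 : Tendsto (fun n => D (2 * n) - p (2 * n + 1)) atTop (nhds (r - r)) :=
      hD2.sub hpconv
    rw [sub_self] at h1
    exact h1.congr fun n => rfl
end

section
/- Let G and H be two nonempty subsets of a metric space (E,σ) such that G is complete and (G,H) has property strongly UC, and let T be an almost cyclic ψ-contraction on G ∪ H. Then T has a unique best approximation in G, i.e. a unique point u₀ ∈ G with σ(u₀,Tu₀) = σ(Tu₀,G). Moreover, for any u ∈ G, the sequence of even iterates {T^{2n}u} converges to u₀. -/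
open Metric Filter Set

/-!
For `x ∈ G` and `y ∈ H`, applying the contraction inequality twice gives the descent
`β (k+1) ≤ β k - ψ (β k) + ψ (γ k)` for `β k = σ(T^{2k}x, T^{2k}y)` and `γ k = σ(T^{2k}y, G)`.
Along an orbit `y k = T^{2k} u` the gaps `σ(y k, T (y k))` and `σ(T (y k), G)` therefore have a
common limit `D`, and strong UC gives `σ(y k, y (k+1)) → 0`. Above `D + δ/2` the descent loses a
fixed amount per step, so after boundedly many steps every pair `(y n, T (y m))` with `σ(y n, y m)`
bounded is nearly optimal in the sense of strong UC; hence the orbit is Cauchy. The orbit of its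
limit `w` shadows that of `u`, so it converges to `w` as well, and then `σ(w, Tw) ≤ D' ≤ σ(Tw, G)`
for the common limit `D'` along the orbit of `w`.
A best approximation `z` satisfies `T²z = z`, and the descent for two of them, `z` and `z'`, gives
`ψ(σ(z, Tz')) ≤ ψ(σ(Tz', G))`, so `σ(z, Tz') = σ(Tz', G)` and strong UC forces `z = z'`.
-/

open scoped Topology

structure PsiDescent (ψ : ℝ → ℝ) (β γ : ℕ → ℝ) : Prop where
  nonneg : ∀ k, 0 ≤ γ k
  le : ∀ k, γ k ≤ β k
  succ_le : ∀ k, β (k + 1) ≤ β k - ψ (β k) + ψ (γ k)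

namespace PsiDescent

variable {ψ : ℝ → ℝ} {β γ : ℕ → ℝ}

theorem antitone (h : PsiDescent ψ β γ) (hψ : MonotoneOn ψ (Ici 0)) : Antitone β :=
  antitone_nat_of_succ_le fun k => by
    have := hψ (h.nonneg k) ((h.nonneg k).trans (h.le k)) (h.le k)
    linarith [h.succ_le k]

theorem exists_tendsto (h : PsiDescent ψ β γ) (hψ : MonotoneOn ψ (Ici 0)) :
    ∃ D, Tendsto β atTop (𝓝 D) :=
  ⟨_, tendsto_atTop_ciInf (h.antitone hψ)
    ⟨0, by rintro _ ⟨k, rfl⟩; exact (h.nonneg k).trans (h.le k)⟩⟩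

theorem le_max (h : PsiDescent ψ β γ) (hψ : MonotoneOn ψ (Ici 0)) {a b : ℝ}
    (hγa : ∀ k, γ k ≤ a) (hab : a ≤ b) (k : ℕ) :
    β k ≤ max b (β 0 - k * (ψ b - ψ a)) := by
  induction k with
  | zero => simp
  | succ k ih =>
    rcases le_or_gt (β k) b with hβb | hbβ
    · exact le_max_of_le_left ((h.antitone hψ k.le_succ).trans hβb)
    · have ha : 0 ≤ a := (h.nonneg 0).trans (hγa 0)
      have hψb : ψ b ≤ ψ (β k) := hψ (ha.trans hab) (ha.trans (hab.trans hbβ.le)) hbβ.le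
      have hψa : ψ (γ k) ≤ ψ a := hψ (h.nonneg k) ha (hγa k)
      have ih' : β k ≤ β 0 - k * (ψ b - ψ a) := (le_max_iff.1 ih).resolve_left hbβ.not_ge
      refine le_max_of_le_right ?_
      push_cast
      linarith [h.succ_le k]

/-- Once the steps `β k - β (k + 1)` are small, `ψ (γ k)` is close to `ψ (β k) ≥ ψ D`. -/
theorem eventually_lt (h : PsiDescent ψ β γ) (hψ : StrictMonoOn ψ (Ici 0)) {D : ℝ}
    (hβ : Tendsto β atTop (𝓝 D)) {ε : ℝ} (hε : 0 < ε) : ∀ᶠ k in atTop, D - ε < γ k := by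
  rcases lt_or_ge (D - ε) 0 with hneg | hpos
  · exact Eventually.of_forall fun k => hneg.trans_le (h.nonneg k)
  have hη : 0 < ψ D - ψ (D - ε) := sub_pos.2 (hψ hpos (hpos.trans (by linarith)) (by linarith))
  have hstep : Tendsto (fun k => β k - β (k + 1)) atTop (𝓝 0) := by
    simpa using hβ.sub (hβ.comp (tendsto_add_atTop_nat 1))
  filter_upwards [hstep.eventually_lt_const hη] with k hk
  have hDβ : D ≤ β k := (h.antitone hψ.monotoneOn).le_of_tendsto hβ k
  have hψD : ψ D ≤ ψ (β k) :=
    hψ.monotoneOn (hpos.trans (by linarith)) (hpos.trans (by linarith)) hDβ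
  have : ψ (D - ε) < ψ (γ k) := by linarith [h.succ_le k]
  exact (hψ.lt_iff_lt hpos (h.nonneg k)).1 this

end PsiDescent

theorem dist_le_mul_of_forall_dist_succ_le {α : Type*} [PseudoMetricSpace α] {f : ℕ → α}
    {N : ℕ} {θ : ℝ} (h : ∀ n ≥ N, dist (f n) (f (n + 1)) ≤ θ) {n : ℕ} (hn : N ≤ n) (s : ℕ) :
    dist (f n) (f (n + s)) ≤ s * θ :=
  calc dist (f n) (f (n + s)) ≤ ∑ i ∈ Finset.Ico n (n + s), dist (f i) (f (i + 1)) :=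
        dist_le_Ico_sum_dist f (by omega)
    _ ≤ (Finset.Ico n (n + s)).card • θ :=
        Finset.sum_le_card_nsmul _ _ _ fun i hi => h i (hn.trans (Finset.mem_Ico.1 hi).1)
    _ = s * θ := by simp

namespace PropSUC

variable {E : Type*} [MetricSpace E] {G H : Set E}

theorem exists_pos_forall_dist_lt (h : PropSUC G H) {ε : ℝ} (hε : 0 < ε) :
    ∃ δ > 0, ∀ u ∈ G, ∀ z ∈ G, ∀ v ∈ H, dist u v < infDist v G + δ →
      dist z v < infDist v G + δ → dist u z < ε := by
  by_contra! hne
  choose u hu z hz v hv huv hzv hεuz using fun n : ℕ => hne (1 / (n + 1)) Nat.one_div_pos_of_nat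
  have hgap : ∀ w : ℕ → E, (∀ n, w n ∈ G) →
      (∀ n, dist (w n) (v n) < infDist (v n) G + 1 / (n + 1)) →
      Tendsto (fun n => dist (w n) (v n) - infDist (v n) G) atTop (𝓝 0) := fun w hw hwv =>
    squeeze_zero (fun n => sub_nonneg.2 (by rw [dist_comm]; exact infDist_le_dist_of_mem (hw n)))
      (fun n => by linarith [hwv n]) tendsto_one_div_add_atTop_nhds_zero_nat
  obtain ⟨n, hn⟩ := ((h u z v hu hz hv (hgap u hu huv) (hgap z hz hzv)).eventually
    (gt_mem_nhds hε)).exists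
  exact (hεuz n).not_gt hn

theorem eq_of_dist_eq_infDist (h : PropSUC G H) {u z v : E} (hu : u ∈ G) (hz : z ∈ G)
    (hv : v ∈ H) (huv : dist u v = infDist v G) (hzv : dist z v = infDist v G) : u = z := by
  by_contra hne
  obtain ⟨δ, hδ, hsmall⟩ := h.exists_pos_forall_dist_lt (dist_pos.2 hne)
  exact lt_irrefl _ (hsmall u hu z hz v hv (by linarith) (by linarith))

end PropSUC

theorem iterate_two_iterate_apply_comm {α : Type*} (f : α → α) (k : ℕ) (x : α) :
    (f^[2])^[k] (f x) = f ((f^[2])^[k] x) :=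
  ((Function.Commute.self_iterate f 2).symm.iterate_left k).eq x

namespace AlmostCyclicPsiContraction

variable {E : Type*} [MetricSpace E] {G H : Set E} {T : E → E} {ψ : ℝ → ℝ} {u w x y z : E}

theorem mapsTo_iterate_left (hT : AlmostCyclicPsiContraction G H T ψ) (k : ℕ) :
    MapsTo (T^[2])^[k] G G :=
  MapsTo.iterate (fun _ hx => hT.2.1 (hT.1 hx)) k

theorem mapsTo_iterate_right (hT : AlmostCyclicPsiContraction G H T ψ) (k : ℕ) :
    MapsTo (T^[2])^[k] H H :=
  MapsTo.iterate (fun _ hy => hT.1 (hT.2.1 hy)) k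

theorem dist_map_le (hT : AlmostCyclicPsiContraction G H T ψ) (hψ : MonotoneOn ψ (Ici 0))
    (hx : x ∈ G) (hy : y ∈ H) : dist (T x) (T y) ≤ dist x y := by
  have hyx : infDist y G ≤ dist x y := by rw [dist_comm]; exact infDist_le_dist_of_mem hx
  linarith [hT.2.2 x hx y hy, hψ infDist_nonneg (infDist_nonneg.trans hyx) hyx]

theorem dist_iterate_two_le (hT : AlmostCyclicPsiContraction G H T ψ) (hψ : MonotoneOn ψ (Ici 0))
    (hx : x ∈ G) (hy : y ∈ H) :
    dist (T^[2] x) (T^[2] y) ≤ dist x y - ψ (dist x y) + ψ (infDist y G) :=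
  calc dist (T (T x)) (T (T y)) = dist (T (T y)) (T (T x)) := dist_comm _ _
    _ ≤ dist (T y) (T x) := hT.dist_map_le hψ (hT.2.1 hy) (hT.1 hx)
    _ = dist (T x) (T y) := dist_comm _ _
    _ ≤ _ := hT.2.2 x hx y hy

theorem infDist_iterate_two_le (hT : AlmostCyclicPsiContraction G H T ψ)
    (hψ : MonotoneOn ψ (Ici 0)) (hG : G.Nonempty) (hy : y ∈ H) :
    infDist (T^[2] y) G ≤ infDist y G :=
  (le_infDist hG).2 fun v hv =>
    calc infDist (T^[2] y) G ≤ dist (T (T y)) (T (T v)) :=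
          infDist_le_dist_of_mem (hT.mapsTo_iterate_left 1 hv)
      _ ≤ dist (T y) (T v) := hT.dist_map_le hψ (hT.2.1 hy) (hT.1 hv)
      _ = dist (T v) (T y) := dist_comm _ _
      _ ≤ dist v y := hT.dist_map_le hψ hv hy
      _ = dist y v := dist_comm _ _

theorem psiDescent (hT : AlmostCyclicPsiContraction G H T ψ) (hψ : MonotoneOn ψ (Ici 0))
    (hx : x ∈ G) (hy : y ∈ H) :
    PsiDescent ψ (fun k => dist ((T^[2])^[k] x) ((T^[2])^[k] y))
      (fun k => infDist ((T^[2])^[k] y) G) where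
  nonneg _ := infDist_nonneg
  le k := by rw [dist_comm]; exact infDist_le_dist_of_mem (hT.mapsTo_iterate_left k hx)
  succ_le k := by
    simp only [Function.iterate_succ_apply']
    exact hT.dist_iterate_two_le hψ (hT.mapsTo_iterate_left k hx) (hT.mapsTo_iterate_right k hy)

theorem psiDescent_orbit (hT : AlmostCyclicPsiContraction G H T ψ) (hψ : MonotoneOn ψ (Ici 0))
    (hx : x ∈ G) (hu : u ∈ G) (n : ℕ) :
    PsiDescent ψ (fun k => dist ((T^[2])^[k] x) (T ((T^[2])^[k + n] u)))
      (fun k => infDist (T ((T^[2])^[k + n] u)) G) := by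
  simpa only [iterate_two_iterate_apply_comm, ← Function.iterate_add_apply] using
    hT.psiDescent hψ hx (hT.1 (hT.mapsTo_iterate_left n hu))

theorem antitone_infDist_orbit (hT : AlmostCyclicPsiContraction G H T ψ)
    (hψ : MonotoneOn ψ (Ici 0)) (hG : G.Nonempty) (hu : u ∈ G) :
    Antitone fun k => infDist (T ((T^[2])^[k] u)) G :=
  antitone_nat_of_succ_le fun k => by
    rw [Function.iterate_succ_apply']
    exact hT.infDist_iterate_two_le hψ hG (hT.1 (hT.mapsTo_iterate_left k hu))

theorem exists_tendsto_orbit (hT : AlmostCyclicPsiContraction G H T ψ)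
    (hψ : StrictMonoOn ψ (Ici 0)) (hu : u ∈ G) :
    ∃ D, Tendsto (fun k => dist ((T^[2])^[k] u) (T ((T^[2])^[k] u))) atTop (𝓝 D) ∧
      Tendsto (fun k => dist ((T^[2])^[k + 1] u) (T ((T^[2])^[k] u))) atTop (𝓝 D) ∧
      Tendsto (fun k => infDist (T ((T^[2])^[k] u)) G) atTop (𝓝 D) := by
  have hd := hT.psiDescent_orbit hψ.monotoneOn hu hu 0
  simp only [add_zero] at hd
  obtain ⟨D, hp⟩ := hd.exists_tendsto hψ.monotoneOn
  have hmem k := hT.mapsTo_iterate_left k hu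
  have hq_le k : dist ((T^[2])^[k + 1] u) (T ((T^[2])^[k] u)) ≤
      dist ((T^[2])^[k] u) (T ((T^[2])^[k] u)) := by
    rw [Function.iterate_succ_apply', dist_comm]
    exact hT.dist_map_le hψ.monotoneOn (hmem k) (hT.1 (hmem k))
  have hle_q k : dist ((T^[2])^[k + 1] u) (T ((T^[2])^[k + 1] u)) ≤
      dist ((T^[2])^[k + 1] u) (T ((T^[2])^[k] u)) := by
    rw [Function.iterate_succ_apply', dist_comm]
    exact hT.dist_map_le hψ.monotoneOn (hT.mapsTo_iterate_left 1 (hmem k)) (hT.1 (hmem k))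
  have hq := tendsto_of_tendsto_of_tendsto_of_le_of_le (hp.comp (tendsto_add_atTop_nat 1)) hp
    hle_q hq_le
  refine ⟨D, hp, hq, tendsto_order.2 ⟨fun a ha => ?_, fun a ha => ?_⟩⟩
  · simpa using hd.eventually_lt hψ hp (sub_pos.2 ha)
  · filter_upwards [hq.eventually_lt_const ha] with k hk
    refine lt_of_le_of_lt ?_ hk
    rw [dist_comm]
    exact infDist_le_dist_of_mem (hmem (k + 1))

theorem tendsto_dist_orbit_succ (hT : AlmostCyclicPsiContraction G H T ψ)
    (hψ : StrictMonoOn ψ (Ici 0)) (hSUC : PropSUC G H) (hu : u ∈ G) :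
    Tendsto (fun k => dist ((T^[2])^[k] u) ((T^[2])^[k + 1] u)) atTop (𝓝 0) := by
  obtain ⟨D, hp, hq, hc⟩ := hT.exists_tendsto_orbit hψ hu
  exact hSUC _ _ _ (fun k => hT.mapsTo_iterate_left k hu)
    (fun k => hT.mapsTo_iterate_left (k + 1) hu) (fun k => hT.1 (hT.mapsTo_iterate_left k hu))
    (by simpa using hp.sub hc) (by simpa using hq.sub hc)

theorem dist_orbit_add_le (hT : AlmostCyclicPsiContraction G H T ψ) (hψ : MonotoneOn ψ (Ici 0))
    (hu : u ∈ G) {m : ℕ} {a b : ℝ} (hca : ∀ k ≥ m, infDist (T ((T^[2])^[k] u)) G ≤ a)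
    (hab : a ≤ b) {n s : ℕ}
    (hs : dist ((T^[2])^[n] u) (T ((T^[2])^[m] u)) - s * (ψ b - ψ a) ≤ b) :
    dist ((T^[2])^[n + s] u) (T ((T^[2])^[m + s] u)) ≤ b := by
  have hd := hT.psiDescent_orbit hψ (hT.mapsTo_iterate_left n hu) hu m
  have := hd.le_max hψ (fun k => hca (k + m) (Nat.le_add_left m k)) hab s
  simp only [zero_add, ← Function.iterate_add_apply] at this
  rw [add_comm n, add_comm m]
  exact this.trans (max_le le_rfl hs)

/-- Above `D + δ / 2` each step of the descent gains at least `ψ (D + δ / 2) - ψ (D + δ / 4)`,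
so the number `s` of steps needed depends only on `V`. -/
theorem exists_forall_dist_orbit_add_lt (hT : AlmostCyclicPsiContraction G H T ψ)
    (hψ : StrictMonoOn ψ (Ici 0)) (hG : G.Nonempty) (hu : u ∈ G) {δ : ℝ} (hδ : 0 < δ) (V : ℝ) :
    ∃ s N : ℕ, ∀ n m, N ≤ m → dist ((T^[2])^[n] u) ((T^[2])^[m] u) ≤ V →
      dist ((T^[2])^[n + s] u) (T ((T^[2])^[m + s] u)) <
        infDist (T ((T^[2])^[m + s] u)) G + δ := by
  obtain ⟨D, hp, -, hc⟩ := hT.exists_tendsto_orbit hψ hu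
  have hDc := (hT.antitone_infDist_orbit hψ.monotoneOn hG hu).le_of_tendsto hc
  have hD : 0 ≤ D := ge_of_tendsto' hp fun _ => dist_nonneg
  have hη : 0 < ψ (D + δ / 2) - ψ (D + δ / 4) :=
    sub_pos.2 (hψ (mem_Ici.2 (by positivity)) (mem_Ici.2 (by positivity)) (by linarith))
  obtain ⟨s, hs⟩ := exists_nat_ge ((V + dist u (T u)) / (ψ (D + δ / 2) - ψ (D + δ / 4)))
  rw [div_le_iff₀ hη] at hs
  obtain ⟨N, hN⟩ := eventually_atTop.1 (hc.eventually_le_const (by linarith : D < D + δ / 4))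
  refine ⟨s, N, fun n m hm hV => ?_⟩
  have hpm : dist ((T^[2])^[m] u) (T ((T^[2])^[m] u)) ≤ dist u (T u) := by
    simpa using (hT.psiDescent_orbit hψ.monotoneOn hu hu 0).antitone hψ.monotoneOn (Nat.zero_le m)
  have hfar := hT.dist_orbit_add_le hψ.monotoneOn hu (fun k hk => hN k (hm.trans hk))
    (by linarith : D + δ / 4 ≤ D + δ / 2) (n := n) (s := s)
    (by linarith [dist_triangle ((T^[2])^[n] u) ((T^[2])^[m] u) (T ((T^[2])^[m] u))])
  linarith [hDc (m + s)]

theorem cauchySeq_orbit (hT : AlmostCyclicPsiContraction G H T ψ) (hψ : StrictMonoOn ψ (Ici 0))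
    (hG : G.Nonempty) (hSUC : PropSUC G H) (hu : u ∈ G) :
    CauchySeq fun k => (T^[2])^[k] u := by
  obtain ⟨D, hp, -, hc⟩ := hT.exists_tendsto_orbit hψ hu
  have hmem k := hT.mapsTo_iterate_left k hu
  rw [Metric.cauchySeq_iff']
  intro ε hε
  obtain ⟨δ, hδ, hclose⟩ := hSUC.exists_pos_forall_dist_lt (half_pos hε)
  obtain ⟨s, N₀, hfar⟩ := hT.exists_forall_dist_orbit_add_lt hψ hG hu hδ (2 * ε)
  set θ := ε / (4 * (s + 1))
  have hθ : 0 < θ := by positivity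
  have hθε : θ ≤ ε := div_le_self hε.le (by linarith)
  have hsθ : s * θ ≤ ε / 4 := by
    rw [mul_div_assoc', div_le_div_iff₀ (by positivity) (by norm_num)]
    nlinarith
  obtain ⟨N₁, hN⟩ := eventually_atTop.1 (((hp.sub hc).eventually_lt_const (by simpa using hδ)).and
    ((hT.tendsto_dist_orbit_succ hψ hSUC hu).eventually_le_const hθ))
  set N := max N₀ N₁
  have hstep n (hn : n ≥ N) := (hN n (le_of_max_le_right hn)).2
  refine ⟨N, fun m hm => ?_⟩
  induction m, hm using Nat.le_induction with
  | base => simpa using hε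
  | succ m hm ih =>
    have hnear := hclose _ (hmem (N + s)) _ (hmem (m + 1 + s)) _ (hT.1 (hmem (m + 1 + s)))
      (hfar N (m + 1) (by omega) (by
        linarith [dist_triangle ((T^[2])^[N] u) ((T^[2])^[m] u) ((T^[2])^[m + 1] u),
          dist_comm ((T^[2])^[N] u) ((T^[2])^[m] u), hstep m hm]))
      (by linarith [(hN (m + 1 + s) (by omega)).1])
    have := dist_le_mul_of_forall_dist_succ_le hstep le_rfl s
    have := dist_le_mul_of_forall_dist_succ_le hstep (by omega : N ≤ m + 1) s
    have := dist_triangle4 ((T^[2])^[m + 1] u) ((T^[2])^[m + 1 + s] u) ((T^[2])^[N + s] u)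
      ((T^[2])^[N] u)
    rw [dist_comm ((T^[2])^[m + 1 + s] u), dist_comm ((T^[2])^[N + s] u) ((T^[2])^[N] u)] at this
    linarith

theorem dist_le_of_tendsto_orbit (hT : AlmostCyclicPsiContraction G H T ψ)
    (hψ : MonotoneOn ψ (Ici 0)) (hu : u ∈ G) (hw : w ∈ G)
    (hlim : Tendsto (fun k => (T^[2])^[k] u) atTop (𝓝 w)) {D : ℝ}
    (hp : Tendsto (fun k => dist ((T^[2])^[k] u) (T ((T^[2])^[k] u))) atTop (𝓝 D)) :
    dist w (T w) ≤ D := by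
  have hle k : dist (T w) ((T^[2])^[k + 1] u) ≤
      dist w ((T^[2])^[k] u) + dist ((T^[2])^[k] u) (T ((T^[2])^[k] u)) := by
    rw [Function.iterate_succ_apply']
    exact (hT.dist_map_le hψ hw (hT.1 (hT.mapsTo_iterate_left k hu))).trans (dist_triangle _ _ _)
  have := le_of_tendsto_of_tendsto' (tendsto_const_nhds.dist (hlim.comp (tendsto_add_atTop_nat 1)))
    ((tendsto_const_nhds.dist hlim).add hp) hle
  simpa [dist_comm] using this

/-- The orbit of `w` shadows the tail of the orbit of `u`, which converges to `w`. -/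
theorem tendsto_orbit_self_of_tendsto_orbit (hT : AlmostCyclicPsiContraction G H T ψ)
    (hψ : StrictMonoOn ψ (Ici 0)) (hG : G.Nonempty) (hSUC : PropSUC G H) (hu : u ∈ G)
    (hw : w ∈ G) (hlim : Tendsto (fun k => (T^[2])^[k] u) atTop (𝓝 w)) :
    Tendsto (fun k => (T^[2])^[k] w) atTop (𝓝 w) := by
  obtain ⟨D, hp, -, hc⟩ := hT.exists_tendsto_orbit hψ hu
  have hDc := (hT.antitone_infDist_orbit hψ.monotoneOn hG hu).le_of_tendsto hc
  rw [Metric.tendsto_atTop]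
  intro ε hε
  obtain ⟨δ, hδ, hclose⟩ := hSUC.exists_pos_forall_dist_lt (half_pos hε)
  have hstart : Tendsto (fun k => dist w ((T^[2])^[k] u) + dist ((T^[2])^[k] u) (T ((T^[2])^[k] u)))
      atTop (𝓝 D) := by
    simpa using ((tendsto_const_nhds (x := w)).dist hlim).add hp
  obtain ⟨n, hn⟩ := eventually_atTop.1 ((hstart.eventually_lt_const (by linarith : D < D + δ)).and
    (((hp.sub hc).eventually_lt_const (by simpa using hδ)).and
      (hlim.eventually (ball_mem_nhds w (half_pos hε)))))
  refine ⟨0, fun k _ => ?_⟩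
  have hshadow := (hT.psiDescent_orbit hψ.monotoneOn hw hu n).antitone hψ.monotoneOn (Nat.zero_le k)
  simp only [Function.iterate_zero_apply, zero_add] at hshadow
  have hclose' := hclose _ (hT.mapsTo_iterate_left k hw) _ (hT.mapsTo_iterate_left (k + n) hu) _
    (hT.1 (hT.mapsTo_iterate_left (k + n) hu))
    (by linarith [dist_triangle w ((T^[2])^[n] u) (T ((T^[2])^[n] u)), (hn n le_rfl).1,
      hDc (k + n)])
    (by linarith [(hn (k + n) (Nat.le_add_left n k)).2.1])
  calc dist ((T^[2])^[k] w) w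
      ≤ dist ((T^[2])^[k] w) ((T^[2])^[k + n] u) + dist ((T^[2])^[k + n] u) w :=
        dist_triangle _ _ _
    _ < ε / 2 + ε / 2 := add_lt_add hclose' (hn (k + n) (Nat.le_add_left n k)).2.2
    _ = ε := add_halves ε

theorem exists_bestApprox_tendsto (hT : AlmostCyclicPsiContraction G H T ψ)
    (hψ : StrictMonoOn ψ (Ici 0)) (hG : G.Nonempty) (hGcomp : IsComplete G) (hSUC : PropSUC G H)
    (hu : u ∈ G) :
    ∃ w ∈ G, dist w (T w) = infDist (T w) G ∧ Tendsto (fun k => (T^[2])^[k] u) atTop (𝓝 w) := by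
  obtain ⟨w, hw, hlim⟩ := cauchySeq_tendsto_of_isComplete hGcomp (hT.mapsTo_iterate_left · hu)
    (hT.cauchySeq_orbit hψ hG hSUC hu)
  refine ⟨w, hw, le_antisymm ?_ (by rw [dist_comm]; exact infDist_le_dist_of_mem hw), hlim⟩
  obtain ⟨D, hp, -, hc⟩ := hT.exists_tendsto_orbit hψ hw
  calc dist w (T w) ≤ D := hT.dist_le_of_tendsto_orbit hψ.monotoneOn hw hw
        (hT.tendsto_orbit_self_of_tendsto_orbit hψ hG hSUC hu hw hlim) hp
    _ ≤ infDist (T w) G := (hT.antitone_infDist_orbit hψ.monotoneOn hG hw).le_of_tendsto hc 0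

theorem iterate_two_eq_of_bestApprox (hT : AlmostCyclicPsiContraction G H T ψ)
    (hψ : MonotoneOn ψ (Ici 0)) (hSUC : PropSUC G H) (hz : z ∈ G)
    (hbz : dist z (T z) = infDist (T z) G) : T^[2] z = z := by
  have hTz : dist (T^[2] z) (T z) = infDist (T z) G := by
    refine le_antisymm ?_ ?_
    · rw [dist_comm, ← hbz]
      exact hT.dist_map_le hψ hz (hT.1 hz)
    · rw [dist_comm]
      exact infDist_le_dist_of_mem (hT.mapsTo_iterate_left 1 hz)
  exact hSUC.eq_of_dist_eq_infDist (hT.mapsTo_iterate_left 1 hz) hz (hT.1 hz) hTz hbz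

theorem eq_of_bestApprox (hT : AlmostCyclicPsiContraction G H T ψ) (hψ : StrictMonoOn ψ (Ici 0))
    (hSUC : PropSUC G H) (hz : z ∈ G) (hz' : z' ∈ G) (hbz : dist z (T z) = infDist (T z) G)
    (hbz' : dist z' (T z') = infDist (T z') G) : z = z' := by
  have hcontr := hT.dist_iterate_two_le hψ.monotoneOn hz (hT.1 hz')
  rw [hT.iterate_two_eq_of_bestApprox hψ.monotoneOn hSUC hz hbz,
    show T^[2] (T z') = T (T^[2] z') from rfl,
    hT.iterate_two_eq_of_bestApprox hψ.monotoneOn hSUC hz' hbz'] at hcontr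
  have hle : dist z (T z') ≤ infDist (T z') G :=
    (hψ.le_iff_le dist_nonneg infDist_nonneg).1 (by linarith)
  exact hSUC.eq_of_dist_eq_infDist hz hz' (hT.1 hz')
    (le_antisymm hle (by rw [dist_comm]; exact infDist_le_dist_of_mem hz)) hbz'

end AlmostCyclicPsiContraction

theorem bestApprox_exists_unique_general {E : Type*} [MetricSpace E]
    (G H : Set E) (hG : G.Nonempty)
    (hGcomp : IsComplete G) (hSUC : PropSUC G H)
    (ψ : ℝ → ℝ) (hψ : PsiMap ψ) (T : E → E)
    (hT : AlmostCyclicPsiContraction G H T ψ) :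
    ∃ u₀ ∈ G, dist u₀ (T u₀) = Metric.infDist (T u₀) G ∧
      (∀ z ∈ G, dist z (T z) = Metric.infDist (T z) G → z = u₀) ∧
      ∀ u ∈ G, Tendsto (fun n => T^[2 * n] u) atTop (nhds u₀) := by
  have hψ := hψ.strictMono
  obtain ⟨u₀, hu₀, hbest₀, -⟩ := hT.exists_bestApprox_tendsto hψ hG hGcomp hSUC hG.some_mem
  refine ⟨u₀, hu₀, hbest₀, fun z hz hbz => hT.eq_of_bestApprox hψ hSUC hz hu₀ hbz hbest₀,
    fun u hu => ?_⟩
  obtain ⟨w, hw, hbest, hlim⟩ := hT.exists_bestApprox_tendsto hψ hG hGcomp hSUC hu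
  rw [hT.eq_of_bestApprox hψ hSUC hw hu₀ hbest hbest₀] at hlim
  simpa only [Function.iterate_mul] using hlim

/-- If `G` is complete, `(G,H)` has property strongly UC, and `T` is an almost cyclic
ψ-contraction on `G ∪ H`, then `T` has a unique best approximation `u₀` in `G`, and
for every `u ∈ G` the sequence `{T^{2n} u}` converges to `u₀`. -/
theorem bestApprox_exists_unique {E : Type*} [MetricSpace E]
    (G H : Set E) (hG : G.Nonempty) (hH : H.Nonempty)
    (hGcomp : IsComplete G) (hSUC : PropSUC G H)
    (ψ : ℝ → ℝ) (hψ : PsiMap ψ) (T : E → E)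
    (hT : AlmostCyclicPsiContraction G H T ψ) :
    ∃ u₀ ∈ G, dist u₀ (T u₀) = Metric.infDist (T u₀) G ∧
      (∀ z ∈ G, dist z (T z) = Metric.infDist (T z) G → z = u₀) ∧
      ∀ u ∈ G, Tendsto (fun n => T^[2 * n] u) atTop (nhds u₀) :=
  bestApprox_exists_unique_general G H hG hGcomp hSUC ψ hψ T hT
end

section
/- Let G and H be two nonempty subsets of a metric space (E,σ) such that G is complete and (G,H) has property strongly UC, and let T be an almost cyclic ψ-contraction on G ∪ H. If u₀ ∈ G is the best approximation for T in G (i.e. σ(u₀,Tu₀) = σ(Tu₀,G)), then Tu₀ is a best approximation for T in H, i.e. σ(Tu₀, T(Tu₀)) = σ(T(Tu₀), H). -/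
open Metric Filter Set

/-- If `G` is complete, `(G,H)` has property strongly UC, `T` is an almost cyclic
ψ-contraction on `G ∪ H`, and `u₀ ∈ G` is a best approximation for `T` in `G`, then
`Tu₀` is a best approximation for `T` in `H`. -/
theorem bestApprox_in_H {E : Type*} [MetricSpace E]
    (G H : Set E) (hG : G.Nonempty) (hH : H.Nonempty)
    (hGcomp : IsComplete G) (hSUC : PropSUC G H)
    (ψ : ℝ → ℝ) (hψ : PsiMap ψ) (T : E → E)
    (hT : AlmostCyclicPsiContraction G H T ψ)
    (u₀ : E) (hu₀ : u₀ ∈ G) (hba : dist u₀ (T u₀) = Metric.infDist (T u₀) G) :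
    dist (T u₀) (T (T u₀)) = Metric.infDist (T (T u₀)) H := by

  obtain ⟨hTG, hTH, hcon⟩ := hT
  have hy : T u₀ ∈ H := hTG hu₀
  have hz : T (T u₀) ∈ G := hTH hy
  -- Step 1: dist (T u₀) (T (T u₀)) ≤ dist u₀ (T u₀)
  have h1 : dist (T u₀) (T (T u₀)) ≤ dist u₀ (T u₀) := by
    have := hcon u₀ hu₀ (T u₀) hy
    rw [hba] at this
    linarith [this, hba]
  have h2 : Metric.infDist (T u₀) G ≤ dist (T (T u₀)) (T u₀) := by
    rw [dist_comm]; exact Metric.infDist_le_dist_of_mem hz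
  have heq : dist (T (T u₀)) (T u₀) = dist u₀ (T u₀) := by
    rw [dist_comm] at h1
    linarith [hba ▸ h2]
  -- Step 2: u₀ = T (T u₀) via strongly UC with constant sequences
  have hfix : u₀ = T (T u₀) := by
    have := hSUC (fun _ => u₀) (fun _ => T (T u₀)) (fun _ => T u₀)
      (fun _ => hu₀) (fun _ => hz) (fun _ => hy)
      (by simp [hba]) (by simp [heq, hba])
    have hzero : dist u₀ (T (T u₀)) = 0 :=
      tendsto_nhds_unique (tendsto_const_nhds) this
    exact eq_of_dist_eq_zero hzero
  -- Step 3: dist u₀ (T u₀) ≤ infDist u₀ H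
  have h3 : dist u₀ (T u₀) ≤ Metric.infDist u₀ H := by
    by_contra hcon2
    push_neg at hcon2
    obtain ⟨v, hv, hlt⟩ := (Metric.infDist_lt_iff hH).mp hcon2
    have hcv := hcon u₀ hu₀ v hv
    have hvG : Metric.infDist v G ≤ dist u₀ v := by
      rw [dist_comm]; exact Metric.infDist_le_dist_of_mem hu₀
    have hpsi : ψ (Metric.infDist v G) ≤ ψ (dist u₀ v) :=
      hψ.strictMono.monotoneOn (Metric.infDist_nonneg) (dist_nonneg) hvG
    have hTv : dist (T u₀) (T v) ≤ dist u₀ v := by linarith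
    have hTvG : T v ∈ G := hTH hv
    have : Metric.infDist (T u₀) G ≤ dist (T u₀) (T v) :=
      Metric.infDist_le_dist_of_mem hTvG
    linarith [hba ▸ this]
  have h4 : Metric.infDist u₀ H ≤ dist u₀ (T u₀) := Metric.infDist_le_dist_of_mem hy
  have : Metric.infDist u₀ H = dist u₀ (T u₀) := le_antisymm h4 h3
  rw [← hfix, dist_comm, this]
end

section
/- Let G and H be two nonempty subsets of a metric space (E,σ) such that G is complete and both (G,H) and (H,G) have property strongly UC, and let T be an almost cyclic ψ-contraction on G ∪ H. If u₀ ∈ G is the best approximation for T in G, then Tu₀ is the unique best approximation for T in H: if v ∈ H satisfies σ(v,Tv) = σ(Tv,H), then v = Tu₀. -/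
open Metric Filter Set

/-- If `G` is complete, both `(G,H)` and `(H,G)` have property strongly UC, `T` is an
almost cyclic ψ-contraction on `G ∪ H`, and `u₀ ∈ G` is a best approximation for `T`
in `G`, then `Tu₀` is the unique best approximation for `T` in `H`. -/
theorem bestApprox_in_H_unique {E : Type*} [MetricSpace E]
    (G H : Set E) (hG : G.Nonempty) (hH : H.Nonempty)
    (hGcomp : IsComplete G) (hSUC : PropSUC G H) (hSUC' : PropSUC H G)
    (ψ : ℝ → ℝ) (hψ : PsiMap ψ) (T : E → E)
    (hT : AlmostCyclicPsiContraction G H T ψ)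
    (u₀ : E) (hu₀ : u₀ ∈ G) (hba : dist u₀ (T u₀) = Metric.infDist (T u₀) G) :
    ∀ v ∈ H, dist v (T v) = Metric.infDist (T v) H → v = T u₀ := by
  obtain ⟨hGH, hHG, hcon⟩ := hT
  intro v hvH hv
  have hTvG : T v ∈ G := hHG hvH
  have hTu₀H : T u₀ ∈ H := hGH hu₀
  have hT2u₀G : T (T u₀) ∈ G := hHG hTu₀H
  have hT2vH : T (T v) ∈ H := hGH hTvG
  have hmono := hψ.strictMono.monotoneOn
  have hinj := hψ.strictMono.injOn
  -- Step 0 : T²u₀ = u₀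
  have h0 : dist (T u₀) (T (T u₀)) ≤ dist u₀ (T u₀) := by
    have h := hcon u₀ hu₀ (T u₀) hTu₀H
    rw [← hba] at h; linarith
  have hd0le : Metric.infDist (T u₀) G ≤ dist (T u₀) (T (T u₀)) :=
    Metric.infDist_le_dist_of_mem hT2u₀G
  have heq0 : dist (T (T u₀)) (T u₀) = Metric.infDist (T u₀) G := by
    rw [dist_comm]; rw [hba] at h0; linarith
  have hT2u₀ : T (T u₀) = u₀ := by
    have e1 : (fun _ : ℕ => dist u₀ (T u₀) - Metric.infDist (T u₀) G) = fun _ => (0:ℝ) := by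
      funext n; rw [hba, sub_self]
    have e2 : (fun _ : ℕ => dist (T (T u₀)) (T u₀) - Metric.infDist (T u₀) G)
        = fun _ => (0:ℝ) := by
      funext n; rw [heq0, sub_self]
    have key := hSUC (fun _ => u₀) (fun _ => T (T u₀)) (fun _ => T u₀)
      (fun _ => hu₀) (fun _ => hT2u₀G) (fun _ => hTu₀H)
      (by rw [e1]; exact tendsto_const_nhds) (by rw [e2]; exact tendsto_const_nhds)
    have := (tendsto_nhds_unique key tendsto_const_nhds).symm
    exact (dist_eq_zero.mp this).symm
  -- Step A : infDist v G = dist v (T v)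
  have hAineq := hcon (T v) hTvG v hvH
  have hA1 : Metric.infDist (T v) H ≤ dist (T v) (T (T v)) :=
    Metric.infDist_le_dist_of_mem hT2vH
  have hdc1 : dist (T v) v = dist v (T v) := dist_comm _ _
  have hdc2 : dist (T v) (T (T v)) = dist (T (T v)) (T v) := dist_comm _ _
  have hpdc : ψ (dist (T v) v) = ψ (dist v (T v)) := by rw [hdc1]
  have hA2 : ψ (dist v (T v)) ≤ ψ (Metric.infDist v G) := by
    linarith [hAineq, hA1, hv, hdc1, hdc2, hpdc]
  have hcle : Metric.infDist v G ≤ dist v (T v) := Metric.infDist_le_dist_of_mem hTvG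
  have hA3 : ψ (Metric.infDist v G) ≤ ψ (dist v (T v)) :=
    hmono (Metric.infDist_nonneg) (dist_nonneg) hcle
  have hcA : Metric.infDist v G = dist v (T v) :=
    hinj (Metric.infDist_nonneg) (dist_nonneg) (le_antisymm hA2 hA3).symm
  -- Step B : T²v = v
  have hpe : ψ (Metric.infDist v G) = ψ (dist v (T v)) := by rw [hcA]
  have hB : dist (T (T v)) (T v) = Metric.infDist (T v) H := by
    linarith [hAineq, hA1, hv, hdc1, hdc2, hpe, hpdc]
  have hT2v : T (T v) = v := by
    have e1 : (fun _ : ℕ => dist v (T v) - Metric.infDist (T v) H) = fun _ => (0:ℝ) := by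
      funext n; rw [hv, sub_self]
    have e2 : (fun _ : ℕ => dist (T (T v)) (T v) - Metric.infDist (T v) H)
        = fun _ => (0:ℝ) := by
      funext n; rw [hB, sub_self]
    have key := hSUC' (fun _ => v) (fun _ => T (T v)) (fun _ => T v)
      (fun _ => hvH) (fun _ => hT2vH) (fun _ => hTvG)
      (by rw [e1]; exact tendsto_const_nhds) (by rw [e2]; exact tendsto_const_nhds)
    have := (tendsto_nhds_unique key tendsto_const_nhds).symm
    exact (dist_eq_zero.mp this).symm
  -- Step C : infDist v G = dist u₀ v
  have i1 := hcon u₀ hu₀ v hvH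
  have i2 := hcon (T v) hTvG (T u₀) hTu₀H
  rw [hT2v, hT2u₀] at i2
  rw [dist_comm v u₀, dist_comm (T v) (T u₀)] at i2
  have hd0b : Metric.infDist (T u₀) G ≤ dist (T u₀) (T v) :=
    Metric.infDist_le_dist_of_mem hTvG
  have hca : Metric.infDist v G ≤ dist u₀ v := by
    rw [dist_comm]; exact Metric.infDist_le_dist_of_mem hu₀
  have hpsi1 : ψ (Metric.infDist v G) ≤ ψ (dist u₀ v) :=
    hmono Metric.infDist_nonneg dist_nonneg hca
  have hpsi2 : ψ (Metric.infDist (T u₀) G) ≤ ψ (dist (T u₀) (T v)) :=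
    hmono Metric.infDist_nonneg dist_nonneg hd0b
  have hceq : ψ (Metric.infDist v G) = ψ (dist u₀ v) := by linarith
  have hca' : Metric.infDist v G = dist u₀ v :=
    hinj Metric.infDist_nonneg dist_nonneg hceq
  -- Step D : T v = u₀, hence v = T u₀
  have e1 : (fun _ : ℕ => dist u₀ v - Metric.infDist v G) = fun _ => (0:ℝ) := by
    funext n; rw [← hca', sub_self]
  have e2 : (fun _ : ℕ => dist (T v) v - Metric.infDist v G) = fun _ => (0:ℝ) := by
    funext n; rw [dist_comm, ← hcA, sub_self]
  have key := hSUC (fun _ => u₀) (fun _ => T v) (fun _ => v)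
    (fun _ => hu₀) (fun _ => hTvG) (fun _ => hvH)
    (by rw [e1]; exact tendsto_const_nhds) (by rw [e2]; exact tendsto_const_nhds)
  have hz := (tendsto_nhds_unique key tendsto_const_nhds).symm
  have hTvu : T v = u₀ := (dist_eq_zero.mp hz).symm
  calc v = T (T v) := hT2v.symm
    _ = T u₀ := by rw [hTvu]
end

section
/- Let G and H be two nonempty subsets of a metric space (E,σ) such that G and H are complete, (G,H) has property strongly UC, and G ∩ H ≠ ∅. Let T be an almost cyclic ψ-contraction on G ∪ H. Then T has a unique fixed point z in G ∩ H, and for any u₀ ∈ G ∩ H the sequence defined by u_{n+1} = T u_n converges to z. -/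
open Metric Filter Set

/-!
On `G ∩ H` the term `ψ(σ(y,G))` is just `ψ 0`, so `T` restricts to a self-map of the complete
set `G ∩ H` satisfying Rhoades' weak contraction inequality `σ(Tx,Ty) ≤ σ(x,y) - φ(σ(x,y))` with
`φ = ψ - ψ 0`. For such maps the distance from an orbit to any fixed point, and the distance
between consecutive iterates, decrease to `0`. Once `σ(x_N, x_{N+1}) ≤ min δ (φ δ)`, the
closed ball of radius `2δ` about `x_N` is invariant, so the orbit is Cauchy; its limit is a fixed
point to which every orbit converges, which forces uniqueness.
-/

open Topology Function

theorem IsComplete.inter_isClosed {α : Type*} [UniformSpace α] {s t : Set α}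
    (hs : IsComplete s) (ht : IsClosed t) : IsComplete (s ∩ t) := by
  intro f hf hft
  obtain ⟨z, hzs, hfz⟩ := hs f hf (hft.trans (principal_mono.mpr inter_subset_left))
  have hzt : z ∈ closure t := by
    have := hf.1
    rw [mem_closure_iff_nhdsWithin_neBot]
    exact neBot_of_le (le_inf hfz (hft.trans (principal_mono.mpr inter_subset_right)))
  exact ⟨z, ⟨hzs, ht.closure_eq ▸ hzt⟩, hfz⟩

def WeakContractionOn {α : Type*} [MetricSpace α] (φ : ℝ → ℝ) (s : Set α) (T : α → α) : Prop :=
  ∀ x ∈ s, ∀ y ∈ s, dist (T x) (T y) ≤ dist x y - φ (dist x y)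

section WeakContraction

variable {φ : ℝ → ℝ} (hφ_mono : MonotoneOn φ (Ici 0)) (hφ_zero : φ 0 = 0)
  (hφ_pos : ∀ t, 0 < t → 0 < φ t)

include hφ_mono hφ_zero in
theorem nonneg_of_monotoneOn_of_zero {t : ℝ} (ht : 0 ≤ t) : 0 ≤ φ t :=
  hφ_zero ▸ hφ_mono self_mem_Ici ht ht

include hφ_mono hφ_zero hφ_pos in
theorem tendsto_zero_of_le_sub {a : ℕ → ℝ} (ha_nonneg : ∀ n, 0 ≤ a n)
    (ha : ∀ n, a (n + 1) ≤ a n - φ (a n)) : Tendsto a atTop (𝓝 0) := by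
  have hanti : Antitone a := antitone_nat_of_succ_le fun n => by
    linarith [ha n, nonneg_of_monotoneOn_of_zero hφ_mono hφ_zero (ha_nonneg n)]
  have hL := tendsto_atTop_ciInf hanti ⟨0, forall_mem_range.mpr ha_nonneg⟩
  set L := ⨅ n, a n
  have hL_le : ∀ n, L ≤ a n := hanti.le_of_tendsto hL
  rcases (ge_of_tendsto' hL ha_nonneg).eq_or_lt with hL0 | hL0
  · rwa [← hL0] at hL
  -- the steps `a n - a (n + 1)` tend to `0`, yet are all at least `φ L > 0`
  have hsteps : Tendsto (fun n => a n - a (n + 1)) atTop (𝓝 0) := by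
    simpa using hL.sub (hL.comp (tendsto_add_atTop_nat 1))
  have hstep_ge : ∀ n, φ L ≤ a n - a (n + 1) := fun n => by
    linarith [ha n, hφ_mono hL0.le (hL0.le.trans (hL_le n)) (hL_le n)]
  linarith [ge_of_tendsto' hsteps hstep_ge, hφ_pos L hL0]

variable {α : Type*} [MetricSpace α] {s : Set α} {T : α → α}

namespace WeakContractionOn

include hφ_mono hφ_zero in
theorem dist_le (hT : WeakContractionOn φ s T) {x y : α} (hx : x ∈ s) (hy : y ∈ s) :
    dist (T x) (T y) ≤ dist x y := by
  linarith [hT x hx y hy,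
    nonneg_of_monotoneOn_of_zero hφ_mono hφ_zero (dist_nonneg (x := x) (y := y))]

include hφ_mono hφ_zero hφ_pos in
theorem tendsto_iterate_of_isFixedPt (hT : WeakContractionOn φ s T) (hTs : MapsTo T s s)
    {z x : α} (hz : z ∈ s) (hTz : IsFixedPt T z) (hx : x ∈ s) :
    Tendsto (fun n => T^[n] x) atTop (𝓝 z) := by
  refine tendsto_iff_dist_tendsto_zero.mpr
    (tendsto_zero_of_le_sub hφ_mono hφ_zero hφ_pos (fun n => dist_nonneg) fun n => ?_)
  rw [iterate_succ_apply']
  nth_rewrite 1 [← hTz.eq]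
  exact hT _ (hTs.iterate n hx) z hz

include hφ_mono hφ_zero hφ_pos in
theorem tendsto_dist_iterate_succ (hT : WeakContractionOn φ s T) (hTs : MapsTo T s s)
    {x : α} (hx : x ∈ s) :
    Tendsto (fun n => dist (T^[n] x) (T^[n + 1] x)) atTop (𝓝 0) := by
  refine tendsto_zero_of_le_sub hφ_mono hφ_zero hφ_pos (fun n => dist_nonneg) fun n => ?_
  rw [iterate_succ_apply' T (n + 1), iterate_succ_apply' T n]
  exact hT _ (hTs.iterate n hx) _ (hTs (hTs.iterate n hx))

include hφ_mono hφ_zero in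
theorem mapsTo_inter_closedBall (hT : WeakContractionOn φ s T) (hTs : MapsTo T s s)
    {y : α} (hy : y ∈ s) {δ : ℝ} (hδ : dist y (T y) ≤ δ) (hδφ : dist y (T y) ≤ φ δ) :
    MapsTo T (s ∩ closedBall y (2 * δ)) (s ∩ closedBall y (2 * δ)) := by
  rintro z ⟨hz, hzy⟩
  refine ⟨hTs hz, mem_closedBall.mpr ?_⟩
  rw [mem_closedBall] at hzy
  have htri : dist (T z) y ≤ dist (T z) (T y) + dist y (T y) :=
    dist_comm y (T y) ▸ dist_triangle _ _ _
  rcases le_or_gt (dist z y) δ with hnear | hfar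
  · linarith [hT.dist_le hφ_mono hφ_zero hz hy]
  · -- far from `y`, the gain `φ(σ(z,y)) ≥ φ δ` absorbs the step `σ(y, T y)`
    have hδ0 : 0 ≤ δ := dist_nonneg.trans hδ
    linarith [hT z hz y hy, hφ_mono hδ0 (hδ0.trans hfar.le) hfar.le]

include hφ_mono hφ_zero hφ_pos in
theorem cauchySeq_iterate (hT : WeakContractionOn φ s T) (hTs : MapsTo T s s) {x : α}
    (hx : x ∈ s) : CauchySeq fun n => T^[n] x := by
  refine Metric.cauchySeq_iff'.mpr fun ε hε => ?_
  have hδ : 0 < ε / 4 := by positivity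
  obtain ⟨N, hN⟩ := ((hT.tendsto_dist_iterate_succ hφ_mono hφ_zero hφ_pos hTs hx).eventually
    (gt_mem_nhds (lt_min hδ (hφ_pos _ hδ)))).exists
  rw [iterate_succ_apply'] at hN
  have hball := hT.mapsTo_inter_closedBall hφ_mono hφ_zero hTs (hTs.iterate N hx)
    (hN.le.trans (min_le_left _ _)) (hN.le.trans (min_le_right _ _))
  refine ⟨N, fun n hn => ?_⟩
  have hn_mem :=
    (hball.iterate (n - N) ⟨hTs.iterate N hx, mem_closedBall_self (by positivity)⟩).2
  rw [← iterate_add_apply, Nat.sub_add_cancel hn, mem_closedBall] at hn_mem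
  linarith

include hφ_mono hφ_zero hφ_pos in
theorem exists_isFixedPt_tendsto_iterate (hT : WeakContractionOn φ s T) (hTs : MapsTo T s s)
    (hs : IsComplete s) (hne : s.Nonempty) :
    ∃ z ∈ s, IsFixedPt T z ∧ ∀ x ∈ s, Tendsto (fun n => T^[n] x) atTop (𝓝 z) := by
  obtain ⟨x, hx⟩ := hne
  obtain ⟨z, hz, hxz⟩ := cauchySeq_tendsto_of_isComplete hs (fun n => hTs.iterate n hx)
    (hT.cauchySeq_iterate hφ_mono hφ_zero hφ_pos hTs hx)
  have hTxz : Tendsto (fun n => T^[n + 1] x) atTop (𝓝 (T z)) := by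
    simp_rw [iterate_succ_apply']
    exact tendsto_iff_dist_tendsto_zero.mpr <| squeeze_zero (fun _ => dist_nonneg)
      (fun n => hT.dist_le hφ_mono hφ_zero (hTs.iterate n hx) hz)
      (tendsto_iff_dist_tendsto_zero.mp hxz)
  have hTz : IsFixedPt T z := tendsto_nhds_unique hTxz (hxz.comp (tendsto_add_atTop_nat 1))
  exact ⟨z, hz, hTz,
    fun y hy => hT.tendsto_iterate_of_isFixedPt hφ_mono hφ_zero hφ_pos hTs hz hTz hy⟩

end WeakContractionOn

end WeakContraction

namespace AlmostCyclicPsiContraction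

variable {E : Type*} [MetricSpace E] {G H : Set E} {T : E → E} {ψ : ℝ → ℝ}

theorem mapsTo_inter (hT : AlmostCyclicPsiContraction G H T ψ) : MapsTo T (G ∩ H) (G ∩ H) :=
  fun _ hx => ⟨hT.2.1 hx.2, hT.1 hx.1⟩

theorem weakContractionOn_inter (hT : AlmostCyclicPsiContraction G H T ψ) :
    WeakContractionOn (fun t => ψ t - ψ 0) (G ∩ H) T := by
  intro x hx y hy
  have h := hT.2.2 x hx.1 y hy.2
  rw [infDist_zero_of_mem hy.1] at h
  linarith

end AlmostCyclicPsiContraction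

theorem fixedPoint_exists_unique_general {E : Type*} [MetricSpace E]
    (G H : Set E) (hGcomp : IsComplete G) (hHcomp : IsComplete H)
    (hGH : (G ∩ H).Nonempty)
    (ψ : ℝ → ℝ) (hψ : PsiMap ψ) (T : E → E)
    (hT : AlmostCyclicPsiContraction G H T ψ) :
    ∃ z ∈ G ∩ H, T z = z ∧ (∀ y ∈ G ∩ H, T y = y → y = z) ∧
      ∀ u₀ ∈ G ∩ H, Tendsto (fun n => T^[n] u₀) atTop (nhds z) := by
  obtain ⟨z, hz, hTz, hconv⟩ := hT.weakContractionOn_inter.exists_isFixedPt_tendsto_iterate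
    (fun a ha b hb hab => sub_le_sub_right (hψ.strictMono.monotoneOn ha hb hab) _) (sub_self _)
    (fun t ht => sub_pos.mpr (hψ.strictMono self_mem_Ici (mem_Ici.mpr ht.le) ht))
    hT.mapsTo_inter (hGcomp.inter_isClosed hHcomp.isClosed) hGH
  refine ⟨z, hz, hTz, fun y hy hTy => ?_, hconv⟩
  exact tendsto_nhds_unique (tendsto_const_nhds.congr fun n => (iterate_fixed hTy n).symm)
    (hconv y hy)

/-- If `G` and `H` are complete, `(G,H)` has property strongly UC, `G ∩ H ≠ ∅`, and
`T` is an almost cyclic ψ-contraction on `G ∪ H`, then `T` has a unique fixed point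
`z ∈ G ∩ H`, and for every `u₀ ∈ G ∩ H` the Picard iterates `T^[n] u₀` converge
to `z`. -/
theorem fixedPoint_exists_unique {E : Type*} [MetricSpace E]
    (G H : Set E) (hG : G.Nonempty) (hH : H.Nonempty)
    (hGcomp : IsComplete G) (hHcomp : IsComplete H)
    (hSUC : PropSUC G H) (hGH : (G ∩ H).Nonempty)
    (ψ : ℝ → ℝ) (hψ : PsiMap ψ) (T : E → E)
    (hT : AlmostCyclicPsiContraction G H T ψ) :
    ∃ z ∈ G ∩ H, T z = z ∧ (∀ y ∈ G ∩ H, T y = y → y = z) ∧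
      ∀ u₀ ∈ G ∩ H, Tendsto (fun n => T^[n] u₀) atTop (nhds z) :=
  fixedPoint_exists_unique_general G H hGcomp hHcomp hGH ψ hψ T hT
end

section
/- Let G and H be two nonempty subsets of a metric space (E,σ) such that G is complete and (G,H) has property strongly UC, and let T be an almost cyclic contraction on G ∪ H. Then T has a unique best approximation u₀ in G (i.e. a unique u₀ ∈ G with σ(u₀,Tu₀) = σ(Tu₀,G)), and {T^{2n}u} converges to u₀ for every u ∈ G. -/
open Metric Filter Set

/-- `T` is an almost cyclic contraction on `G ∪ H`: it is cyclic and there is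
`β ∈ [0,1)` with `σ(Tu,Tv) ≤ β·σ(u,v) + (1−β)·σ(v,G)` for all `u ∈ G`, `v ∈ H`. -/
def AlmostCyclicContraction {E : Type*} [MetricSpace E] (G H : Set E) (T : E → E) : Prop :=
  Set.MapsTo T G H ∧ Set.MapsTo T H G ∧
    ∃ β : ℝ, 0 ≤ β ∧ β < 1 ∧ ∀ u ∈ G, ∀ v ∈ H,
      dist (T u) (T v) ≤ β * dist u v + (1 - β) * Metric.infDist v G

lemma orbit_lemma {E : Type*} [MetricSpace E] (G H : Set E)
    (hGcomp : IsComplete G) (hSUC : PropSUC G H) (T : E → E)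
    (hTGH : Set.MapsTo T G H) (hTHG : Set.MapsTo T H G)
    (β : ℝ) (hβ0 : 0 ≤ β) (hβ1 : β < 1)
    (hcon : ∀ u ∈ G, ∀ v ∈ H,
      dist (T u) (T v) ≤ β * dist u v + (1 - β) * Metric.infDist v G)
    (u : E) (hu : u ∈ G) :
    ∃ w ∈ G, T (T w) = w ∧ dist w (T w) = Metric.infDist (T w) G ∧
      Tendsto (fun n => T^[2 * n] u) atTop (nhds w) := by
  set x : ℕ → E := fun n => T^[n] u with hxdef
  have hx : ∀ n, x (n + 1) = T (x n) := fun n => Function.iterate_succ_apply' T n u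
  have hx0 : x 0 = u := rfl
  have hxG : ∀ k, x (2 * k) ∈ G := by
    intro k
    induction k with
    | zero => simpa [hx0] using hu
    | succ k ih =>
      have h1 : (2 * (k + 1)) = (2 * k + 1) + 1 := by omega
      rw [h1, hx, hx]
      exact hTHG (hTGH ih)
  have hxH : ∀ k, x (2 * k + 1) ∈ H := by
    intro k; rw [hx]; exact hTGH (hxG k)
  set d : ℕ → ℝ := fun n => dist (x n) (x (n + 1)) with hddef
  set s : ℕ → ℝ := fun k => infDist (x (2 * k + 1)) G with hsdef
  have hdk : ∀ n, d n = dist (x n) (x (n + 1)) := fun n => rfl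
  have hsk : ∀ k, s k = infDist (x (2 * k + 1)) G := fun k => rfl
  have hd_nonneg : ∀ n, 0 ≤ d n := fun n => dist_nonneg
  have hs_nonneg : ∀ n, 0 ≤ s n := fun n => infDist_nonneg
  -- s k ≤ d (2k) and s k ≤ d (2k+1)
  have hs_le_even : ∀ k, s k ≤ d (2 * k) := by
    intro k
    have := infDist_le_dist_of_mem (x := x (2 * k + 1)) (hxG k)
    simpa [hsdef, hddef, dist_comm] using this
  have hs_le_odd : ∀ k, s k ≤ d (2 * k + 1) := by
    intro k
    have h1 : (2 * k + 1) + 1 = 2 * (k + 1) := by omega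
    have := infDist_le_dist_of_mem (x := x (2 * k + 1)) (hxG (k + 1))
    rw [hddef]
    simp only [h1]
    exact this
  -- contraction recursions for d
  have hd_odd : ∀ k, d (2 * k + 1) ≤ β * d (2 * k) + (1 - β) * s k := by
    intro k
    have h := hcon (x (2 * k)) (hxG k) (x (2 * k + 1)) (hxH k)
    rw [← hx, ← hx] at h
    exact h
  have hxG2 : ∀ k, x (2 * k + 2) ∈ G := by
    intro k
    have h1 : 2 * k + 2 = 2 * (k + 1) := by omega
    rw [h1]; exact hxG (k + 1)
  have hd_even : ∀ k, d (2 * k + 2) ≤ β * d (2 * k + 1) + (1 - β) * s k := by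
    intro k
    have h := hcon (x (2 * k + 2)) (hxG2 k) (x (2 * k + 1)) (hxH k)
    rw [← hx, ← hx] at h
    calc d (2 * k + 2) = dist (x (2 * k + 3)) (x (2 * k + 2)) := dist_comm _ _
      _ ≤ β * dist (x (2 * k + 2)) (x (2 * k + 1)) + (1 - β) * infDist (x (2 * k + 1)) G := h
      _ = β * d (2 * k + 1) + (1 - β) * s k := by
          rw [hdk (2 * k + 1), hsk k, dist_comm]
  -- d is antitone
  have hd_anti : Antitone d := by
    apply antitone_nat_of_succ_le
    intro n
    rcases Nat.even_or_odd n with ⟨k, hk⟩ | ⟨k, hk⟩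
    · subst hk
      have h1 := hd_odd k
      have h2 := hs_le_even k
      have : k + k = 2 * k := by omega
      rw [this]
      nlinarith [hd_odd k, hs_le_even k]
    · subst hk
      have : 2 * k + 1 + 1 = 2 * k + 2 := rfl
      nlinarith [hd_even k, hs_le_odd k]
  set δ : ℝ := ⨅ n, d n with hδdef
  have hbdd : BddBelow (Set.range d) := ⟨0, fun r ⟨n, hn⟩ => hn ▸ hd_nonneg n⟩
  have hδ_nonneg : 0 ≤ δ := le_ciInf hd_nonneg
  have hδ_le : ∀ n, δ ≤ d n := fun n => ciInf_le hbdd n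
  have hd_tendsto : Tendsto d atTop (nhds δ) := tendsto_atTop_ciInf hd_anti hbdd
  have h2k : Tendsto (fun k : ℕ => 2 * k) atTop atTop :=
    tendsto_atTop_mono (fun k => by simp only [id_eq]; omega) tendsto_id
  have h2k1 : Tendsto (fun k : ℕ => 2 * k + 1) atTop atTop :=
    tendsto_atTop_mono (fun k => by simp only [id_eq]; omega) tendsto_id
  have hd2k : Tendsto (fun k => d (2 * k)) atTop (nhds δ) := hd_tendsto.comp h2k
  have hd2k1 : Tendsto (fun k => d (2 * k + 1)) atTop (nhds δ) := hd_tendsto.comp h2k1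
  -- s tends to δ
  have hs_tendsto : Tendsto s atTop (nhds δ) := by
    have hlow : ∀ k, (δ - β * d (2 * k + 1)) / (1 - β) ≤ s k := by
      intro k
      rw [div_le_iff₀ (by linarith)]
      have h1 := hd_even k
      have h2 := hδ_le (2 * k + 2)
      nlinarith
    have hlow_tendsto :
        Tendsto (fun k => (δ - β * d (2 * k + 1)) / (1 - β)) atTop (nhds δ) := by
      have : Tendsto (fun k => (δ - β * d (2 * k + 1)) / (1 - β)) atTop
          (nhds ((δ - β * δ) / (1 - β))) :=
        ((tendsto_const_nhds.sub (hd2k1.const_mul β))).div_const _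
      have heq : (δ - β * δ) / (1 - β) = δ := by
        rw [div_eq_iff (by linarith : (1:ℝ) - β ≠ 0)]; ring
      rwa [heq] at this
    exact tendsto_of_tendsto_of_tendsto_of_le_of_le hlow_tendsto hd2k hlow hs_le_even
  have hgap1 : Tendsto (fun k => d (2 * k) - s k) atTop (nhds 0) := by
    simpa using hd2k.sub hs_tendsto
  have hgap2 : Tendsto (fun k => d (2 * k + 1) - s k) atTop (nhds 0) := by
    simpa using hd2k1.sub hs_tendsto
  -- even-index gap
  have hEvenGap : Tendsto (fun k => dist (x (2 * k)) (x (2 * k + 2))) atTop (nhds 0) := by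
    refine hSUC (fun k => x (2 * k)) (fun k => x (2 * k + 2)) (fun k => x (2 * k + 1))
      hxG hxG2 hxH ?_ ?_
    · exact hgap1
    · refine Tendsto.congr (f₁ := fun k => d (2 * k + 1) - s k) ?_ hgap2
      intro k
      simp only [hdk, hsk, dist_comm]
  have h1β : (0:ℝ) < 1 - β := by linarith
  have hd_le_d0 : ∀ n, d n ≤ d 0 := fun n => hd_anti (Nat.zero_le n)
  have hs_le_d0 : ∀ k, s k ≤ d 0 := fun k => (hs_le_even k).trans (hd_le_d0 _)
  set C₁ : ℝ := 2 * d 0 / (1 - β) + d 0 with hC₁def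
  have hC₁_nonneg : 0 ≤ C₁ := by
    have h1 : 0 ≤ 2 * d 0 / (1 - β) := div_nonneg (by linarith [hd_nonneg 0]) h1β.le
    have := hd_nonneg 0
    rw [hC₁def]; linarith
  have hr : ∀ k, dist (x 1) (x (2 * k)) ≤ C₁ := by
    intro k
    induction k with
    | zero =>
      have h0 : dist (x 1) (x 0) = d 0 := dist_comm _ _
      have h1 : 0 ≤ 2 * d 0 / (1 - β) := div_nonneg (by linarith [hd_nonneg 0]) h1β.le
      rw [show (2 * 0 : ℕ) = 0 from rfl, h0, hC₁def]; linarith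
    | succ k ih =>
      have e : 2 * (k + 1) = 2 * k + 1 + 1 := by omega
      rw [e, hx, hx]
      have h := hcon (x 0) hu (x (2 * k + 1)) (hxH k)
      rw [← hsk] at h
      have htri : dist (x 0) (x (2 * k + 1)) ≤ d 0 + C₁ + d 0 := by
        have h4 := dist_triangle4 (x 0) (x 1) (x (2 * k)) (x (2 * k + 1))
        have e1 : dist (x 0) (x 1) = d 0 := rfl
        have e2 : dist (x (2 * k)) (x (2 * k + 1)) = d (2 * k) := rfl
        rw [e1, e2] at h4
        have := hd_le_d0 (2 * k)
        linarith
      have hA : 2 * d 0 / (1 - β) * (1 - β) = 2 * d 0 := div_mul_cancel₀ _ h1β.ne'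
      have hs' := hs_le_d0 k
      have hd00 := hd_nonneg 0
      have h2 : dist (T (x 0)) (T (x (2 * k + 1))) ≤ β * (d 0 + C₁ + d 0) + (1 - β) * d 0 := by
        have hb := mul_le_mul_of_nonneg_left htri hβ0
        have hc := mul_le_mul_of_nonneg_left hs' h1β.le
        linarith
      have h3 : β * (d 0 + C₁ + d 0) + (1 - β) * d 0 ≤ C₁ := by
        rw [hC₁def]
        nlinarith [hA, mul_nonneg h1β.le hd00]
      linarith
  have hφbound : ∀ n m, dist (x (2 * n)) (x (2 * m + 1)) ≤ 2 * C₁ + d 0 := by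
    intro n m
    have h4 := dist_triangle4 (x (2 * n)) (x 1) (x (2 * m)) (x (2 * m + 1))
    have e1 : dist (x (2 * n)) (x 1) = dist (x 1) (x (2 * n)) := dist_comm _ _
    have e2 : dist (x (2 * m)) (x (2 * m + 1)) = d (2 * m) := rfl
    rw [e1, e2] at h4
    have := hd_le_d0 (2 * m)
    linarith [hr n, hr m]
  have hφrec : ∀ n m, dist (x (2 * n + 2)) (x (2 * m + 3)) ≤
      β ^ 2 * dist (x (2 * n)) (x (2 * m + 1)) + (1 - β) * (s n + β * s m) := by
    intro n m
    have h1 := hcon (x (2 * n)) (hxG n) (x (2 * m + 1)) (hxH m)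
    rw [← hx, ← hx, ← hsk] at h1
    have h2 := hcon (x (2 * m + 2)) (hxG2 m) (x (2 * n + 1)) (hxH n)
    rw [← hx, ← hx, ← hsk] at h2
    calc dist (x (2 * n + 2)) (x (2 * m + 3)) = dist (x (2 * m + 3)) (x (2 * n + 2)) :=
          dist_comm _ _
      _ ≤ β * dist (x (2 * m + 2)) (x (2 * n + 1)) + (1 - β) * s n := h2
      _ = β * dist (x (2 * n + 1)) (x (2 * m + 2)) + (1 - β) * s n := by rw [dist_comm]
      _ ≤ β * (β * dist (x (2 * n)) (x (2 * m + 1)) + (1 - β) * s m) + (1 - β) * s n := by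
          have := mul_le_mul_of_nonneg_left h1 hβ0
          linarith
      _ = β ^ 2 * dist (x (2 * n)) (x (2 * m + 1)) + (1 - β) * (s n + β * s m) := by ring
  -- key uniform estimate
  have hstep5 : ∀ ε > (0:ℝ), ∃ N, ∀ n, N ≤ n → ∀ m, N ≤ m →
      dist (x (2 * n)) (x (2 * m + 1)) ≤ δ + ε := by
    intro ε hε
    set C : ℝ := 2 * C₁ + d 0 with hCdef
    have hC0 : 0 ≤ C := by rw [hCdef]; linarith [hd_nonneg 0]
    obtain ⟨N₀, hN₀⟩ := (Metric.tendsto_atTop.mp hs_tendsto) (ε / 2) (by linarith)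
    have hsN : ∀ j, N₀ ≤ j → s j ≤ δ + ε / 2 := by
      intro j hj
      have h := hN₀ j hj
      rw [Real.dist_eq] at h
      have := abs_lt.mp h
      linarith [this.2]
    have hind : ∀ t, ∀ n m, N₀ + t ≤ n → N₀ + t ≤ m →
        dist (x (2 * n)) (x (2 * m + 1)) ≤ β ^ (2 * t) * C + (δ + ε / 2) := by
      intro t
      induction t with
      | zero =>
        intro n m _ _
        simp only [Nat.mul_zero, pow_zero, one_mul]
        linarith [hφbound n m, hδ_nonneg]
      | succ t ih =>
        intro n m hn hm
        obtain ⟨n', rfl⟩ : ∃ n', n = n' + 1 := ⟨n - 1, by omega⟩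
        obtain ⟨m', rfl⟩ : ∃ m', m = m' + 1 := ⟨m - 1, by omega⟩
        have h1 := hφrec n' m'
        have h2 := ih n' m' (by omega) (by omega)
        have h3 := hsN n' (by omega)
        have h4 := hsN m' (by omega)
        have e1 : 2 * (n' + 1) = 2 * n' + 2 := by omega
        have e2 : 2 * (m' + 1) + 1 = 2 * m' + 3 := by omega
        rw [e1, e2]
        have hpow : β ^ (2 * (t + 1)) = β ^ 2 * β ^ (2 * t) := by
          rw [show 2 * (t + 1) = 2 + 2 * t from by omega, pow_add]
        have ha : β ^ 2 * dist (x (2 * n')) (x (2 * m' + 1)) ≤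
            β ^ 2 * (β ^ (2 * t) * C + (δ + ε / 2)) :=
          mul_le_mul_of_nonneg_left h2 (pow_nonneg hβ0 2)
        have hb : s n' + β * s m' ≤ (δ + ε / 2) + β * (δ + ε / 2) :=
          add_le_add h3 (mul_le_mul_of_nonneg_left h4 hβ0)
        have hc : (1 - β) * (s n' + β * s m') ≤ (1 - β) * ((δ + ε / 2) + β * (δ + ε / 2)) :=
          mul_le_mul_of_nonneg_left hb h1β.le
        calc dist (x (2 * n' + 2)) (x (2 * m' + 3)) ≤
            β ^ 2 * dist (x (2 * n')) (x (2 * m' + 1)) + (1 - β) * (s n' + β * s m') := h1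
          _ ≤ β ^ 2 * (β ^ (2 * t) * C + (δ + ε / 2)) +
              (1 - β) * ((δ + ε / 2) + β * (δ + ε / 2)) := by linarith
          _ = β ^ (2 * (t + 1)) * C + (δ + ε / 2) := by rw [hpow]; ring
    have hβ2lt : β ^ 2 < 1 := by nlinarith
    obtain ⟨t, ht⟩ : ∃ t, β ^ (2 * t) * C < ε / 2 := by
      have hten : Tendsto (fun t : ℕ => (β ^ 2) ^ t * C) atTop (nhds 0) := by
        simpa using
          (tendsto_pow_atTop_nhds_zero_of_lt_one (by positivity) hβ2lt).mul_const C
      obtain ⟨t, ht⟩ := (Metric.tendsto_atTop.mp hten) (ε / 2) (by linarith)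
      refine ⟨t, ?_⟩
      have h := ht t le_rfl
      rw [Real.dist_eq, sub_zero] at h
      have h2 : (β ^ 2) ^ t * C = β ^ (2 * t) * C := by rw [← pow_mul]
      rw [h2] at h
      exact lt_of_le_of_lt (le_abs_self _) h
    refine ⟨N₀ + t, fun n hn m hm => ?_⟩
    have := hind t n m hn hm
    linarith
  -- 0 ≤ gap for general pairs
  have hgap_nonneg : ∀ n m, 0 ≤ dist (x (2 * n)) (x (2 * m + 1)) - s m := by
    intro n m
    have h := infDist_le_dist_of_mem (x := x (2 * m + 1)) (hxG n)
    rw [← hsk] at h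
    rw [dist_comm] at h
    linarith
  -- Cauchy
  have hcauchy : CauchySeq (fun k => x (2 * k)) := by
    rw [Metric.cauchySeq_iff]
    by_contra hcontra
    push_neg at hcontra
    obtain ⟨ε, hε, hbad⟩ := hcontra
    choose mk hmk nk hnk hdist using hbad
    have hmktop : Tendsto mk atTop atTop := tendsto_atTop_mono hmk tendsto_id
    have hgapA : Tendsto
        (fun k => dist (x (2 * nk k)) (x (2 * mk k + 1)) - s (mk k)) atTop (nhds 0) := by
      rw [Metric.tendsto_atTop]
      intro ε' hε'
      obtain ⟨N₁, hN₁⟩ := hstep5 (ε' / 3) (by linarith)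
      obtain ⟨N₂, hN₂⟩ := (Metric.tendsto_atTop.mp hs_tendsto) (ε' / 3) (by linarith)
      refine ⟨max N₁ N₂, fun k hk => ?_⟩
      have hk1 : N₁ ≤ k := le_trans (le_max_left _ _) hk
      have hk2 : N₂ ≤ k := le_trans (le_max_right _ _) hk
      have hup := hN₁ (nk k) (le_trans hk1 (hnk k)) (mk k) (le_trans hk1 (hmk k))
      have hsl := hN₂ (mk k) (le_trans hk2 (hmk k))
      rw [Real.dist_eq] at hsl
      have hsl2 := abs_lt.mp hsl
      have hlow := hgap_nonneg (nk k) (mk k)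
      rw [Real.dist_eq, sub_zero, abs_of_nonneg hlow]
      linarith [hsl2.1]
    have hgapB : Tendsto
        (fun k => dist (x (2 * mk k)) (x (2 * mk k + 1)) - s (mk k)) atTop (nhds 0) :=
      hgap1.comp hmktop
    have key := hSUC (fun k => x (2 * nk k)) (fun k => x (2 * mk k))
      (fun k => x (2 * mk k + 1)) (fun k => hxG _) (fun k => hxG _) (fun k => hxH _)
      hgapA hgapB
    obtain ⟨K, hK⟩ := (Metric.tendsto_atTop.mp key) ε hε
    have h := hK K le_rfl
    rw [Real.dist_eq, sub_zero] at h
    have h2 := hdist K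
    rw [dist_comm] at h2
    have h3 : dist (x (2 * nk K)) (x (2 * mk K)) ≤ |dist (x (2 * nk K)) (x (2 * mk K))| :=
      le_abs_self _
    linarith
  obtain ⟨w, hwG, hwconv⟩ := cauchySeq_tendsto_of_isComplete hGcomp (fun k => hxG k) hcauchy
  have hTwH : T w ∈ H := hTGH hwG
  have hdw0 : Tendsto (fun k => dist w (x (2 * k))) atTop (nhds 0) := by
    have := tendsto_iff_dist_tendsto_zero.mp hwconv
    simpa [dist_comm] using this
  have hshift : Tendsto (fun k => x (2 * k + 2)) atTop (nhds w) := by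
    have h1 : Tendsto (fun k => x (2 * (k + 1))) atTop (nhds w) :=
      hwconv.comp (tendsto_add_atTop_nat 1)
    refine h1.congr fun k => ?_
    congr 1
  have hwodd : Tendsto (fun k => dist w (x (2 * k + 1))) atTop (nhds δ) := by
    have hsq : Tendsto (fun k => dist w (x (2 * k + 1)) - d (2 * k)) atTop (nhds 0) := by
      apply squeeze_zero_norm (fun k => ?_) hdw0
      have := abs_dist_sub_le w (x (2 * k)) (x (2 * k + 1))
      simpa [hdk, Real.norm_eq_abs] using this
    have := hsq.add hd2k
    simpa using this
  have hTw_le : dist w (T w) ≤ δ := by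
    have hseq : ∀ k, dist (T w) (x (2 * k + 2)) ≤
        β * dist w (x (2 * k + 1)) + (1 - β) * s k := by
      intro k
      have h := hcon w hwG (x (2 * k + 1)) (hxH k)
      rw [← hx, ← hsk] at h
      exact h
    have hL : Tendsto (fun k => dist (T w) (x (2 * k + 2))) atTop (nhds (dist (T w) w)) :=
      tendsto_const_nhds.dist hshift
    have hR : Tendsto (fun k => β * dist w (x (2 * k + 1)) + (1 - β) * s k) atTop
        (nhds (β * δ + (1 - β) * δ)) := (hwodd.const_mul β).add (hs_tendsto.const_mul (1 - β))
    have h := le_of_tendsto_of_tendsto' hL hR hseq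
    rw [dist_comm] at h
    nlinarith [h]
  have hinf_le : infDist (T w) G ≤ dist w (T w) := by
    have := infDist_le_dist_of_mem (x := T w) hwG
    rwa [dist_comm] at this
  have hT2wG : T (T w) ∈ G := hTHG hTwH
  have hseq2 : ∀ k, dist (T (T w)) (x (2 * k + 1)) - s k ≤
      (β * dist (x (2 * k)) (T w) + (1 - β) * infDist (T w) G) - s k := by
    intro k
    have h := hcon (x (2 * k)) (hxG k) (T w) hTwH
    rw [← hx] at h
    rw [dist_comm] at h
    linarith
  have hnn2 : ∀ k, 0 ≤ dist (T (T w)) (x (2 * k + 1)) - s k := by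
    intro k
    have h := infDist_le_dist_of_mem (x := x (2 * k + 1)) hT2wG
    rw [← hsk, dist_comm] at h
    linarith
  have hgap3 : Tendsto (fun k => dist (T (T w)) (x (2 * k + 1)) - s k) atTop (nhds 0) := by
    have hup : Tendsto
        (fun k => (β * dist (x (2 * k)) (T w) + (1 - β) * infDist (T w) G) - s k) atTop
        (nhds (β * dist w (T w) + (1 - β) * infDist (T w) G - δ)) := by
      have h1 : Tendsto (fun k => dist (x (2 * k)) (T w)) atTop (nhds (dist w (T w))) :=
        hwconv.dist tendsto_const_nhds
      exact ((h1.const_mul β).add tendsto_const_nhds).sub hs_tendsto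
    have hub_nonneg : 0 ≤ β * dist w (T w) + (1 - β) * infDist (T w) G - δ :=
      ge_of_tendsto' hup (fun k => le_trans (hnn2 k) (hseq2 k))
    have hub_nonpos : β * dist w (T w) + (1 - β) * infDist (T w) G - δ ≤ 0 := by
      nlinarith [hTw_le, hinf_le, mul_nonneg hβ0 (sub_nonneg.mpr hTw_le),
        mul_nonneg h1β.le (sub_nonneg.mpr (hinf_le.trans hTw_le))]
    have heq0 : β * dist w (T w) + (1 - β) * infDist (T w) G - δ = 0 :=
      le_antisymm hub_nonpos hub_nonneg
    rw [heq0] at hup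
    exact squeeze_zero hnn2 hseq2 hup
  have hgap2' : Tendsto (fun k => dist (x (2 * k + 2)) (x (2 * k + 1)) - s k) atTop (nhds 0) := by
    refine Tendsto.congr (f₁ := fun k => d (2 * k + 1) - s k) ?_ hgap2
    intro k
    simp only [hdk, hsk, dist_comm]
  have hkey := hSUC (fun k => x (2 * k + 2)) (fun _ => T (T w)) (fun k => x (2 * k + 1))
    hxG2 (fun _ => hT2wG) hxH hgap2' hgap3
  have hfix : T (T w) = w := by
    have h1 : Tendsto (fun k => x (2 * k + 2)) atTop (nhds (T (T w))) :=
      tendsto_iff_dist_tendsto_zero.mpr hkey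
    exact tendsto_nhds_unique h1 hshift
  have hbest : dist w (T w) = infDist (T w) G := by
    have h := hcon w hwG (T w) hTwH
    rw [hfix, dist_comm] at h
    have h2 : dist w (T w) ≤ infDist (T w) G := by nlinarith [h, hinf_le]
    exact le_antisymm h2 hinf_le
  exact ⟨w, hwG, hfix, hbest, hwconv⟩

/-- If `G` is complete, `(G,H)` has property strongly UC, and `T` is an almost cyclic
contraction on `G ∪ H`, then `T` has a unique best approximation `u₀` in `G` and
`{T^{2n} u}` converges to `u₀` for every `u ∈ G`. -/
theorem bestApprox_almostCyclicContraction {E : Type*} [MetricSpace E]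
    (G H : Set E) (hG : G.Nonempty) (hH : H.Nonempty)
    (hGcomp : IsComplete G) (hSUC : PropSUC G H)
    (T : E → E) (hT : AlmostCyclicContraction G H T) :
    ∃ u₀ ∈ G, dist u₀ (T u₀) = Metric.infDist (T u₀) G ∧
      (∀ z ∈ G, dist z (T z) = Metric.infDist (T z) G → z = u₀) ∧
      ∀ u ∈ G, Tendsto (fun n => T^[2 * n] u) atTop (nhds u₀) := by
  obtain ⟨hTGH, hTHG, β, hβ0, hβ1, hcon⟩ := hT
  have h1β : (0:ℝ) < 1 - β := by linarith
  obtain ⟨u₁, hu₁⟩ := hG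
  obtain ⟨u₀, hu₀G, hfix₀, hbest₀, -⟩ :=
    orbit_lemma G H hGcomp hSUC T hTGH hTHG β hβ0 hβ1 hcon u₁ hu₁
  have huniq : ∀ z ∈ G, dist z (T z) = infDist (T z) G → z = u₀ := by
    intro z hzG hzbest
    have hTzH : T z ∈ H := hTGH hzG
    have hT2zG : T (T z) ∈ G := hTHG hTzH
    have h1 : infDist (T z) G ≤ dist (T z) (T (T z)) := infDist_le_dist_of_mem hT2zG
    have h2 : dist (T z) (T (T z)) ≤ β * dist z (T z) + (1 - β) * infDist (T z) G :=
      hcon z hzG (T z) hTzH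
    have h3 : dist (T (T z)) (T z) - infDist (T z) G = 0 := by
      rw [dist_comm]
      nlinarith [h1, h2, hzbest]
    have h4 : dist z (T z) - infDist (T z) G = 0 := by rw [hzbest]; ring
    have hsucz := hSUC (fun _ => z) (fun _ => T (T z)) (fun _ => T z)
      (fun _ => hzG) (fun _ => hT2zG) (fun _ => hTzH)
      (by simp only [h4]; exact tendsto_const_nhds)
      (by simp only [h3]; exact tendsto_const_nhds)
    have hz2 : T (T z) = z := by
      have h0 : dist z (T (T z)) = 0 := tendsto_nhds_unique tendsto_const_nhds hsucz
      exact (dist_eq_zero.mp h0).symm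
    have hTu₀H : T u₀ ∈ H := hTGH hu₀G
    have ha0 : 0 ≤ dist u₀ (T z) - infDist (T z) G := by
      have h := infDist_le_dist_of_mem (x := T z) hu₀G
      rw [dist_comm] at h; linarith
    have hb0 : 0 ≤ dist z (T u₀) - infDist (T u₀) G := by
      have h := infDist_le_dist_of_mem (x := T u₀) hzG
      rw [dist_comm] at h; linarith
    have hie1 : dist z (T u₀) ≤ β * dist u₀ (T z) + (1 - β) * infDist (T z) G := by
      have h := hcon u₀ hu₀G (T z) hTzH
      rw [hz2, dist_comm] at h; exact h
    have hie2 : dist u₀ (T z) ≤ β * dist z (T u₀) + (1 - β) * infDist (T u₀) G := by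
      have h := hcon z hzG (T u₀) hTu₀H
      rw [hfix₀, dist_comm] at h; exact h
    have hab : dist u₀ (T z) - infDist (T z) G + (dist z (T u₀) - infDist (T u₀) G) ≤ 0 := by
      nlinarith [hie1, hie2, ha0, hb0, h1β]
    have ha : dist u₀ (T z) - infDist (T z) G = 0 := by linarith
    have hsucz2 := hSUC (fun _ => u₀) (fun _ => z) (fun _ => T z)
      (fun _ => hu₀G) (fun _ => hzG) (fun _ => hTzH)
      (by simp only [ha]; exact tendsto_const_nhds)
      (by simp only [h4]; exact tendsto_const_nhds)
    have h0 : dist u₀ z = 0 := tendsto_nhds_unique tendsto_const_nhds hsucz2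
    exact (dist_eq_zero.mp h0).symm
  refine ⟨u₀, hu₀G, hbest₀, huniq, ?_⟩
  intro u huG
  obtain ⟨w, hwG, hwfix, hwbest, hwconv⟩ :=
    orbit_lemma G H hGcomp hSUC T hTGH hTHG β hβ0 hβ1 hcon u huG
  rwa [huniq w hwG hwbest] at hwconv
end

section
/- Let G and H be two nonempty subsets of a metric space (E,σ) such that G is complete and (G,H) has property strongly UC, and let T be a cyclic contraction on G ∪ H. Then there exists a unique u ∈ G such that σ(u,Tu) = σ(G,H). -/
open Metric Filter Set

/-- `T` is a cyclic contraction on `G ∪ H`: it is cyclic and there is `β ∈ [0,1)` with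
`σ(Tu,Tv) ≤ β·σ(u,v) + (1−β)·σ(G,H)` for all `u ∈ G`, `v ∈ H`. -/
def CyclicContraction {E : Type*} [MetricSpace E] (G H : Set E) (T : E → E) : Prop :=
  Set.MapsTo T G H ∧ Set.MapsTo T H G ∧
    ∃ β : ℝ, 0 ≤ β ∧ β < 1 ∧ ∀ u ∈ G, ∀ v ∈ H,
      dist (T u) (T v) ≤ β * dist u v + (1 - β) * setDist G H

/-!
The even orbit `xₙ = T^[2n] x` stays in `G`, and iterating the contraction inequality gives
`σ(xₘ, T xₙ) ≤ σ(G,H) + β^(2n) K` for `n ≤ m`, with `K` coming from the boundedness of the orbit.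
Strong UC turns this into the Cauchy property of `(xₙ)`, and the contraction inequality passes to
the limit. For uniqueness, strong UC says that a point of `H` has at most one point of `G` at
distance `σ(G,H)`; hence every best proximity point `u` is fixed by `T ∘ T`, and two best proximity
points `u, w` satisfy `σ(u, T w) = σ(G,H)`.
-/

open Topology Function

section BestProximity

variable {E : Type*} [MetricSpace E] {G H : Set E}

lemma setDist_le_dist {u v : E} (hu : u ∈ G) (hv : v ∈ H) : setDist G H ≤ dist u v :=
  csInf_le ⟨0, by rintro _ ⟨a, -, b, -, rfl⟩; exact dist_nonneg⟩ (mem_image2_of_mem hu hv)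

lemma setDist_le_infDist {v : E} (hv : v ∈ H) : setDist G H ≤ infDist v G := by
  rcases G.eq_empty_or_nonempty with rfl | hG
  · simp [setDist]
  · exact (le_infDist hG).2 fun u hu => dist_comm u v ▸ setDist_le_dist hu hv

lemma infDist_eq_setDist_of_dist_eq {u v : E} (hu : u ∈ G) (hv : v ∈ H)
    (h : dist u v = setDist G H) : infDist v G = setDist G H :=
  le_antisymm (h ▸ dist_comm u v ▸ infDist_le_dist_of_mem hu) (setDist_le_infDist hv)

lemma exists_forall_le_of_le_mul_add {p : ℕ → ℝ} {r c : ℝ} (hr₀ : 0 ≤ r) (hr₁ : r < 1)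
    (h : ∀ k, p (k + 1) ≤ r * p k + c) : ∃ M, ∀ k, p k ≤ M := by
  refine ⟨max (p 0) (c / (1 - r)), fun k => ?_⟩
  induction k with
  | zero => exact le_max_left _ _
  | succ k ih =>
    have hc : c ≤ (1 - r) * max (p 0) (c / (1 - r)) :=
      (div_le_iff₀' (by linarith)).1 (le_max_right _ _)
    nlinarith [h k, mul_le_mul_of_nonneg_left ih hr₀]

namespace PropSUC

lemma eq_of_dist_eq_setDist (hSUC : PropSUC G H) {u z v : E} (hu : u ∈ G) (hz : z ∈ G)
    (hv : v ∈ H) (huv : dist u v = setDist G H) (hzv : dist z v = setDist G H) : u = z := by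
  have hinf := infDist_eq_setDist_of_dist_eq hu hv huv
  have h := hSUC (fun _ => u) (fun _ => z) (fun _ => v) (fun _ => hu) (fun _ => hz)
    (fun _ => hv) (by simp [huv, hinf]) (by simp [hzv, hinf])
  exact dist_eq_zero.1 (tendsto_nhds_unique tendsto_const_nhds h)

lemma cauchySeq (hSUC : PropSUC G H) {x y : ℕ → E} (hx : ∀ n, x n ∈ G) (hy : ∀ n, y n ∈ H)
    {ε : ℕ → ℝ} (hε : Tendsto ε atTop (𝓝 0))
    (hxy : ∀ n m, n ≤ m → dist (x m) (y n) ≤ setDist G H + ε n) : CauchySeq x := by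
  have hgap : ∀ f : ℕ → ℕ, (∀ n, n ≤ f n) →
      Tendsto (fun n => dist (x (f n)) (y n) - infDist (y n) G) atTop (𝓝 0) := fun f hf =>
    squeeze_zero
      (fun n => sub_nonneg.2 (dist_comm (y n) (x (f n)) ▸ infDist_le_dist_of_mem (hx (f n))))
      (fun n => by linarith [hxy n (f n) (hf n), setDist_le_infDist (G := G) (hy n)]) hε
  rw [Metric.cauchySeq_iff]
  by_contra! hfar
  obtain ⟨δ, hδ, hfar⟩ := hfar
  choose m hm k hk hmk using hfar
  have h := hSUC _ _ y (fun n => hx (m n)) (fun n => hx (k n)) hy (hgap m hm) (hgap k hk)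
  exact hδ.not_ge (ge_of_tendsto h (Eventually.of_forall hmk))

end PropSUC

structure IsCyclicContractionWith (G H : Set E) (T : E → E) (β : ℝ) : Prop where
  mapsTo_left : MapsTo T G H
  mapsTo_right : MapsTo T H G
  nonneg : 0 ≤ β
  lt_one : β < 1
  dist_le : ∀ u ∈ G, ∀ v ∈ H, dist (T u) (T v) ≤ β * dist u v + (1 - β) * setDist G H

lemma CyclicContraction.exists_isCyclicContractionWith {T : E → E}
    (hT : CyclicContraction G H T) : ∃ β, IsCyclicContractionWith G H T β :=
  let ⟨hGH, hHG, β, hβ₀, hβ₁, hβ⟩ := hT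
  ⟨β, hGH, hHG, hβ₀, hβ₁, hβ⟩

namespace IsCyclicContractionWith

variable {T : E → E} {β : ℝ}

lemma sq_lt_one (hT : IsCyclicContractionWith G H T β) : β ^ 2 < 1 := by
  nlinarith [hT.nonneg, hT.lt_one]

lemma iterate_two_mul_mem (hT : IsCyclicContractionWith G H T β) {x : E} (hx : x ∈ G)
    (n : ℕ) : T^[2 * n] x ∈ G := by
  rw [iterate_mul]
  exact (hT.mapsTo_right.comp hT.mapsTo_left).iterate n hx

lemma iterate_two_mul_add_one_mem (hT : IsCyclicContractionWith G H T β) {x : E} (hx : x ∈ G)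
    (n : ℕ) : T^[2 * n + 1] x ∈ H := by
  rw [iterate_succ_apply']
  exact hT.mapsTo_left (hT.iterate_two_mul_mem hx n)

lemma dist_iterate_sub_setDist_le (hT : IsCyclicContractionWith G H T β) {u v : E}
    (hu : u ∈ G) (hv : v ∈ H) (k : ℕ) :
    dist (T^[k] u) (T^[k] v) - setDist G H ≤ β ^ k * (dist u v - setDist G H) := by
  induction k generalizing u v with
  | zero => simp
  | succ k ih =>
    rw [iterate_succ_apply, iterate_succ_apply, dist_comm]
    calc dist (T^[k] (T v)) (T^[k] (T u)) - setDist G H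
        ≤ β ^ k * (dist (T v) (T u) - setDist G H) :=
          ih (hT.mapsTo_right hv) (hT.mapsTo_left hu)
      _ ≤ β ^ k * (β * (dist u v - setDist G H)) := by
          gcongr ?_ * ?_
          · exact pow_nonneg hT.nonneg k
          · rw [dist_comm]; linarith [hT.dist_le u hu v hv]
      _ = β ^ (k + 1) * (dist u v - setDist G H) := by ring

lemma dist_apply_eq_setDist (hT : IsCyclicContractionWith G H T β) {u v : E} (hu : u ∈ G)
    (hv : v ∈ H) (h : dist u v = setDist G H) : dist (T u) (T v) = setDist G H :=
  le_antisymm (by linarith [h ▸ hT.dist_le u hu v hv])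
    (dist_comm (T v) (T u) ▸ setDist_le_dist (hT.mapsTo_right hv) (hT.mapsTo_left hu))

lemma apply_apply_eq_self (hT : IsCyclicContractionWith G H T β) (hSUC : PropSUC G H) {u : E}
    (hu : u ∈ G) (h : dist u (T u) = setDist G H) : T (T u) = u := by
  have hTu := hT.mapsTo_left hu
  refine hSUC.eq_of_dist_eq_setDist (hT.mapsTo_right hTu) hu hTu ?_ h
  rw [dist_comm]
  exact hT.dist_apply_eq_setDist hu hTu h

lemma eq_of_dist_eq_setDist (hT : IsCyclicContractionWith G H T β) (hSUC : PropSUC G H)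
    {u w : E} (hu : u ∈ G) (hw : w ∈ G) (hud : dist u (T u) = setDist G H)
    (hwd : dist w (T w) = setDist G H) : u = w := by
  have hTw := hT.mapsTo_left hw
  have hcontr := hT.dist_iterate_sub_setDist_le hu hTw 2
  rw [show T^[2] u = u from hT.apply_apply_eq_self hSUC hu hud,
    show T^[2] (T w) = T w from congrArg T (hT.apply_apply_eq_self hSUC hw hwd)] at hcontr
  have hlow := setDist_le_dist hu hTw
  have hβ := hT.sq_lt_one
  refine hSUC.eq_of_dist_eq_setDist hu hw hTw (le_antisymm ?_ hlow) hwd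
  nlinarith

lemma exists_dist_iterate_le (hT : IsCyclicContractionWith G H T β) {x : E} (hx : x ∈ G) :
    ∃ K, ∀ n m, n ≤ m →
      dist (T^[2 * m] x) (T^[2 * n + 1] x) ≤ setDist G H + (β ^ 2) ^ n * K := by
  have hTx := hT.mapsTo_left hx
  have hrec : ∀ k, dist (T^[2 * (k + 1)] x) (T x) ≤ β ^ 2 * dist (T^[2 * k] x) (T x) +
      ((1 - β ^ 2) * setDist G H + dist (T^[3] x) (T x)) := by
    intro k
    have h := hT.dist_iterate_sub_setDist_le (hT.iterate_two_mul_mem hx k) hTx 2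
    rw [← iterate_add_apply, show 2 + 2 * k = 2 * (k + 1) by ring,
      show T^[2] (T x) = T^[3] x from rfl] at h
    linarith [dist_triangle (T^[2 * (k + 1)] x) (T^[3] x) (T x)]
  obtain ⟨M, hM⟩ := exists_forall_le_of_le_mul_add (p := fun k => dist (T^[2 * k] x) (T x)) (sq_nonneg β) hT.sq_lt_one hrec
  refine ⟨M - setDist G H, fun n m hnm => ?_⟩
  obtain ⟨j, rfl⟩ := Nat.exists_eq_add_of_le hnm
  have h := hT.dist_iterate_sub_setDist_le (hT.iterate_two_mul_mem hx j) hTx (2 * n)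
  rw [← iterate_add_apply, ← iterate_succ_apply, show 2 * n + 2 * j = 2 * (n + j) by ring,
    pow_mul] at h
  nlinarith [hM j, pow_nonneg (sq_nonneg β) n]

lemma dist_eq_setDist_of_tendsto (hT : IsCyclicContractionWith G H T β) {x : ℕ → E} {u : E}
    (hx : ∀ n, x n ∈ G) (hu : u ∈ G) (hxT : ∀ n, x (n + 1) = T (T (x n)))
    (hlim : Tendsto x atTop (𝓝 u))
    (hgap : Tendsto (fun n => dist (x n) (T (x n))) atTop (𝓝 (setDist G H))) :
    dist u (T u) = setDist G H := by
  refine le_antisymm ?_ (setDist_le_dist hu (hT.mapsTo_left hu))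
  have hleft : Tendsto (fun n => dist (x (n + 1)) (T u)) atTop (𝓝 (dist u (T u))) :=
    (hlim.comp (tendsto_add_atTop_nat 1)).dist tendsto_const_nhds
  have hdu : Tendsto (fun n => dist u (x n)) atTop (𝓝 0) := by
    simpa using (tendsto_const_nhds (x := u)).dist hlim
  have hright : Tendsto (fun n => β * (dist u (x n) + dist (x n) (T (x n))) +
      (1 - β) * setDist G H) atTop (𝓝 (β * (0 + setDist G H) + (1 - β) * setDist G H)) :=
    ((hdu.add hgap).const_mul β).add tendsto_const_nhds
  have hbound : ∀ n, dist (x (n + 1)) (T u) ≤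
      β * (dist u (x n) + dist (x n) (T (x n))) + (1 - β) * setDist G H := by
    intro n
    rw [hxT, dist_comm]
    calc dist (T u) (T (T (x n))) ≤ β * dist u (T (x n)) + (1 - β) * setDist G H :=
          hT.dist_le u hu _ (hT.mapsTo_left (hx n))
      _ ≤ β * (dist u (x n) + dist (x n) (T (x n))) + (1 - β) * setDist G H := by
          gcongr
          · exact hT.nonneg
          · exact dist_triangle _ _ _
  linarith [le_of_tendsto_of_tendsto' hleft hright hbound]

lemma exists_dist_eq_setDist (hT : IsCyclicContractionWith G H T β) (hSUC : PropSUC G H)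
    (hGcomp : IsComplete G) {x : E} (hx : x ∈ G) : ∃ u ∈ G, dist u (T u) = setDist G H := by
  obtain ⟨K, hK⟩ := hT.exists_dist_iterate_le hx
  have hε : Tendsto (fun n => (β ^ 2) ^ n * K) atTop (𝓝 0) := by
    simpa using (tendsto_pow_atTop_nhds_zero_of_lt_one (sq_nonneg β) hT.sq_lt_one).mul_const K
  have hxG := hT.iterate_two_mul_mem hx
  obtain ⟨u, hu, hlim⟩ := cauchySeq_tendsto_of_isComplete hGcomp hxG
    (hSUC.cauchySeq hxG (hT.iterate_two_mul_add_one_mem hx) hε hK)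
  refine ⟨u, hu, hT.dist_eq_setDist_of_tendsto hxG hu (fun n => ?_) hlim ?_⟩
  · rw [show 2 * (n + 1) = 2 + 2 * n by ring, iterate_add_apply]
    rfl
  · refine tendsto_of_tendsto_of_tendsto_of_le_of_le tendsto_const_nhds
      (by simpa using tendsto_const_nhds.add hε) (fun n => ?_) (fun n => ?_)
    · exact setDist_le_dist (hxG n) (hT.mapsTo_left (hxG n))
    · simpa only [iterate_succ_apply'] using hK n n le_rfl

end IsCyclicContractionWith

end BestProximity

theorem bestProximityPoint_cyclicContraction_general {E : Type*} [MetricSpace E]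
    (G H : Set E) (hG : G.Nonempty)
    (hGcomp : IsComplete G) (hSUC : PropSUC G H)
    (T : E → E) (hT : CyclicContraction G H T) :
    ∃! u, u ∈ G ∧ dist u (T u) = setDist G H := by
  obtain ⟨β, hβ⟩ := hT.exists_isCyclicContractionWith
  obtain ⟨x, hx⟩ := hG
  obtain ⟨u, hu, hud⟩ := hβ.exists_dist_eq_setDist hSUC hGcomp hx
  exact ⟨u, ⟨hu, hud⟩, fun w ⟨hw, hwd⟩ => hβ.eq_of_dist_eq_setDist hSUC hw hu hwd hud⟩

/-- If `G` is complete, `(G,H)` has property strongly UC, and `T` is a cyclic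
contraction on `G ∪ H`, then there is a unique `u ∈ G` with `σ(u,Tu) = σ(G,H)`. -/
theorem bestProximityPoint_cyclicContraction {E : Type*} [MetricSpace E]
    (G H : Set E) (hG : G.Nonempty) (hH : H.Nonempty)
    (hGcomp : IsComplete G) (hSUC : PropSUC G H)
    (T : E → E) (hT : CyclicContraction G H T) :
    ∃! u, u ∈ G ∧ dist u (T u) = setDist G H :=
  bestProximityPoint_cyclicContraction_general G H hG hGcomp hSUC T hT
end

section
/- Let G and H be two nonempty subsets of a reflexive Banach space E such that G is weakly closed and H is compact, and let T be an almost cyclic contraction on G ∪ H that is weakly sequentially continuous on G (i.e. if u_n → u weakly with u_n, u ∈ G, then Tu_n → Tu weakly). Then there exists u ∈ G such that ‖u − Tu‖ = σ(Tu,G). -/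
open Metric Filter Set

/-!
Iterate `T ∘ T` from a point of `G`. With `bₙ = ‖uₙ - T uₙ‖` and `σₙ = σ(T uₙ, G) ≤ bₙ`, the
contraction inequality applied twice gives `bₙ₊₁ ≤ β² bₙ + (1 - β²) σₙ`, so `bₙ` decreases to some
`M`. Compactness of `H` and reflexivity give a subsequence along which `T uₙ → p` in norm and
`uₙ ⇀ u₀ ∈ G` weakly, and weak continuity of `T` forces `p = T u₀`. Passing to the limit in the
recursion gives `M ≤ σ(p, G)`, weak lower semicontinuity of the norm gives `‖u₀ - p‖ ≤ M`, and
`σ(p, G) ≤ ‖u₀ - p‖` because `u₀ ∈ G`.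

Weak sequential compactness of bounded sequences comes from the sequential Banach–Alaoglu theorem
in the bidual of the closed span of the sequence: that span is separable and reflexive, so its
bidual, and hence its dual, is separable.
-/

open NormedSpace TopologicalSpace Topology

section WeakConvergence

variable {𝕜 : Type*} [RCLike 𝕜] {E : Type*} [NormedAddCommGroup E] [NormedSpace 𝕜 E]

theorem Submodule.exists_dual_map_eq_zero_of_notMem (Y : Submodule 𝕜 E) [IsClosed (Y : Set E)]
    {x : E} (hx : x ∉ Y) : ∃ f : StrongDual 𝕜 E, (∀ y ∈ Y, f y = 0) ∧ f x ≠ 0 := by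
  obtain ⟨g, hg⟩ := SeparatingDual.exists_ne_zero (R := 𝕜) (x := Y.mkQ x)
    ((Submodule.Quotient.mk_eq_zero Y).not.2 hx)
  exact ⟨g.comp Y.mkQL, fun y hy => by simp [(Submodule.Quotient.mk_eq_zero Y).2 hy], hg⟩

theorem Submodule.surjective_inclusionInDoubleDual
    (href : Function.Surjective (inclusionInDoubleDual 𝕜 E))
    (Y : Submodule 𝕜 E) [IsClosed (Y : Set E)] :
    Function.Surjective (inclusionInDoubleDual 𝕜 Y) := by
  intro Λ
  let restrict : StrongDual 𝕜 E →L[𝕜] StrongDual 𝕜 Y := ContinuousLinearMap.precomp 𝕜 Y.subtypeL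
  obtain ⟨x, hx⟩ := href (Λ.comp restrict)
  have hxΛ : ∀ f : StrongDual 𝕜 E, f x = Λ (restrict f) := fun f => congr($hx f)
  have hxY : x ∈ Y := by
    by_contra hxY
    obtain ⟨f, hfY, hfx⟩ := Y.exists_dual_map_eq_zero_of_notMem hxY
    have hf : restrict f = 0 := by ext y; exact hfY y y.2
    exact hfx (by rw [hxΛ, hf, map_zero])
  refine ⟨⟨x, hxY⟩, ContinuousLinearMap.ext fun φ => ?_⟩
  obtain ⟨g, hg, -⟩ := exists_extension_norm_eq Y φ
  have hφ : restrict g = φ := by ext y; exact hg y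
  rw [dual_def, ← hg, ← hφ]
  exact hxΛ g

theorem separableSpace_of_separableSpace_strongDual [SeparableSpace (StrongDual 𝕜 E)] :
    SeparableSpace E := by
  have hnorming : ∀ g : StrongDual 𝕜 E, ∃ x : E, ‖x‖ ≤ 1 ∧ ‖g‖ / 2 ≤ ‖g x‖ := by
    intro g
    rcases eq_or_ne g 0 with rfl | hg
    · exact ⟨0, by simp⟩
    · obtain ⟨x, hx, hgx⟩ := g.exists_lt_apply_of_lt_opNorm (half_lt_self (norm_pos_iff.2 hg))
      exact ⟨x, hx.le, hgx.le⟩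
  choose x hx1 hgx using hnorming
  obtain ⟨g, hg⟩ := exists_dense_seq (StrongDual 𝕜 E)
  let S := Submodule.span 𝕜 (range (x ∘ g))
  let Y := S.topologicalClosure
  have : IsClosed (Y : Set E) := S.isClosed_topologicalClosure
  have hY : (Y : Set E) = univ := by
    refine eq_univ_of_forall fun z => by_contra fun hz => ?_
    obtain ⟨f, hfY, hfz⟩ := Y.exists_dual_map_eq_zero_of_notMem hz
    have hf : 0 < ‖f‖ := norm_pos_iff.2 fun h => hfz (by simp [h])
    obtain ⟨n, hn⟩ := hg.exists_dist_lt f (by positivity : 0 < ‖f‖ / 3)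
    rw [dist_eq_norm] at hn
    have hfx : f (x (g n)) = 0 :=
      hfY _ (S.le_topologicalClosure (Submodule.subset_span ⟨n, rfl⟩))
    -- `g n` is close to `f`, which kills the vector `x (g n)` norming `g n`
    have hsmall : ‖g n (x (g n))‖ ≤ ‖f - g n‖ := by
      calc ‖g n (x (g n))‖ = ‖(f - g n) (x (g n))‖ := by simp [hfx]
        _ ≤ ‖f - g n‖ * ‖x (g n)‖ := (f - g n).le_opNorm _
        _ ≤ ‖f - g n‖ := mul_le_of_le_one_right (norm_nonneg _) (hx1 _)
    have := norm_sub_norm_le f (g n)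
    linarith [hgx (g n)]
  have hsep : IsSeparable (Y : Set E) :=
    ((countable_range _).isSeparable.span (R := 𝕜)).closure
  rw [hY] at hsep
  exact isSeparable_univ_iff.1 hsep

theorem exists_subseq_forall_dual_tendsto_of_separableSpace [SeparableSpace E]
    (href : Function.Surjective (inclusionInDoubleDual 𝕜 E)) {u : ℕ → E} {C : ℝ}
    (hC : ∀ n, ‖u n‖ ≤ C) :
    ∃ (u₀ : E) (ψ : ℕ → ℕ), StrictMono ψ ∧
      ∀ f : StrongDual 𝕜 E, Tendsto (fun k => f (u (ψ k))) atTop (𝓝 (f u₀)) := by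
  have : SeparableSpace (StrongDual 𝕜 (StrongDual 𝕜 E)) :=
    href.denseRange.separableSpace (inclusionInDoubleDual 𝕜 E).continuous
  have : SeparableSpace (StrongDual 𝕜 E) :=
    separableSpace_of_separableSpace_strongDual (𝕜 := 𝕜) (E := StrongDual 𝕜 E)
  let w : ℕ → WeakDual 𝕜 (StrongDual 𝕜 E) :=
    fun n => StrongDual.toWeakDual (inclusionInDoubleDual 𝕜 E (u n))
  have hw : ∀ n, w n ∈ WeakDual.toStrongDual ⁻¹' closedBall 0 C :=
    fun n => (mem_closedBall_zero_iff (E := StrongDual 𝕜 (StrongDual 𝕜 E))).2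
      ((double_dual_bound 𝕜 E (u n)).trans (hC n))
  obtain ⟨Λ, -, ψ, hψ, hΛ⟩ := WeakDual.isSeqCompact_closedBall 𝕜 _ 0 C hw
  obtain ⟨u₀, hu₀⟩ := href (WeakDual.toStrongDual Λ)
  refine ⟨u₀, ψ, hψ, fun f => ?_⟩
  rw [show f u₀ = Λ f from congr($hu₀ f)]
  exact ((WeakDual.eval_continuous f).tendsto Λ).comp hΛ

theorem exists_subseq_forall_dual_tendsto
    (href : Function.Surjective (inclusionInDoubleDual 𝕜 E)) {u : ℕ → E}
    (hu : Bornology.IsBounded (range u)) :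
    ∃ (u₀ : E) (ψ : ℕ → ℕ), StrictMono ψ ∧
      ∀ f : StrongDual 𝕜 E, Tendsto (fun k => f (u (ψ k))) atTop (𝓝 (f u₀)) := by
  obtain ⟨C, hC⟩ := isBounded_iff_forall_norm_le.1 hu
  let S := Submodule.span 𝕜 (range u)
  let Y := S.topologicalClosure
  have : IsClosed (Y : Set E) := S.isClosed_topologicalClosure
  have : SeparableSpace Y := ((countable_range u).isSeparable.span (R := 𝕜)).closure.separableSpace
  let uY : ℕ → Y := fun n => ⟨u n, S.le_topologicalClosure (Submodule.subset_span ⟨n, rfl⟩)⟩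
  obtain ⟨y₀, ψ, hψ, hy₀⟩ :=
    exists_subseq_forall_dual_tendsto_of_separableSpace (Y.surjective_inclusionInDoubleDual href)
      (u := uY) fun n => hC _ ⟨n, rfl⟩
  exact ⟨y₀, ψ, hψ, fun f => hy₀ (f.comp Y.subtypeL)⟩

theorem mem_of_forall_dual_tendsto {G : Set E} (hG : IsClosed (toWeakSpace 𝕜 E '' G))
    {x : ℕ → E} {x₀ : E} (hx : ∀ n, x n ∈ G)
    (h : ∀ f : StrongDual 𝕜 E, Tendsto (fun n => f (x n)) atTop (𝓝 (f x₀))) : x₀ ∈ G := by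
  have hinj : Function.Injective (topDualPairing 𝕜 E).flip := fun y z hyz =>
    (SeparatingDual.eq_iff_forall_dual_eq (R := 𝕜)).2 fun f => LinearMap.congr_fun hyz f
  have hlim : Tendsto (fun n => toWeakSpace 𝕜 E (x n)) atTop (𝓝 (toWeakSpace 𝕜 E x₀)) :=
    (WeakBilin.tendsto_iff_forall_eval_tendsto _ hinj).2 h
  obtain ⟨y, hy, hyx⟩ :=
    hG.mem_of_tendsto hlim (Eventually.of_forall fun n => mem_image_of_mem _ (hx n))
  rwa [← (toWeakSpace 𝕜 E).injective hyx]

theorem eq_of_tendsto_of_forall_dual_tendsto {x : ℕ → E} {p q : E} (hp : Tendsto x atTop (𝓝 p))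
    (hq : ∀ f : StrongDual 𝕜 E, Tendsto (fun n => f (x n)) atTop (𝓝 (f q))) : p = q :=
  (SeparatingDual.eq_iff_forall_dual_eq (R := 𝕜)).2 fun f =>
    tendsto_nhds_unique ((f.continuous.tendsto p).comp hp) (hq f)

theorem norm_le_of_forall_dual_tendsto {x : ℕ → E} {x₀ : E} {M : ℝ}
    (hx : ∀ f : StrongDual 𝕜 E, Tendsto (fun n => f (x n)) atTop (𝓝 (f x₀)))
    (hM : Tendsto (fun n => ‖x n‖) atTop (𝓝 M)) : ‖x₀‖ ≤ M := by
  have hM0 : 0 ≤ M := ge_of_tendsto' hM fun n => norm_nonneg _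
  refine norm_le_dual_bound 𝕜 x₀ hM0 fun f => ?_
  exact le_of_tendsto_of_tendsto' (hx f).norm (hM.mul_const ‖f‖) fun n =>
    (f.le_opNorm (x n)).trans_eq (mul_comm _ _)

end WeakConvergence

theorem le_of_tendsto_of_succ_le {b σ : ℕ → ℝ} {φ : ℕ → ℕ} {c M L : ℝ} (hc : c < 1)
    (hb : ∀ n, b (n + 1) ≤ c * b n + (1 - c) * σ n) (hM : Tendsto b atTop (𝓝 M))
    (hφ : Tendsto φ atTop atTop) (hL : Tendsto (fun k => σ (φ k)) atTop (𝓝 L)) : M ≤ L := by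
  have hMc : M ≤ c * M + (1 - c) * L :=
    le_of_tendsto_of_tendsto' ((hM.comp (tendsto_add_atTop_nat 1)).comp hφ)
      (((hM.comp hφ).const_mul c).add (hL.const_mul (1 - c))) fun k => hb (φ k)
  nlinarith

theorem Metric.isBounded_range_of_tendsto_dist {α : Type*} [PseudoMetricSpace α] {u v : ℕ → α}
    {M : ℝ} (hv : Bornology.IsBounded (range v))
    (h : Tendsto (fun n => dist (u n) (v n)) atTop (𝓝 M)) : Bornology.IsBounded (range u) := by
  obtain ⟨r, hr⟩ := hv.subset_closedBall (v 0)
  obtain ⟨C, hC⟩ := isBounded_iff_forall_norm_le.1 (isBounded_range_of_tendsto _ h)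
  refine (isBounded_closedBall (x := v 0) (r := C + r)).subset ?_
  rintro _ ⟨n, rfl⟩
  have h₁ : dist (u n) (v n) ≤ C := (le_abs_self _).trans (hC _ ⟨n, rfl⟩)
  have h₂ : dist (v n) (v 0) ≤ r := hr ⟨n, rfl⟩
  exact (dist_triangle _ _ _).trans (add_le_add h₁ h₂)

section AlmostCyclicContraction

variable {E : Type*} [MetricSpace E] {G H : Set E} {T : E → E}

theorem dist_apply_apply_le_of_almostCyclic {β : ℝ} (hGH : MapsTo T G H) (hHG : MapsTo T H G)
    (hβ : 0 ≤ β)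
    (hT : ∀ u ∈ G, ∀ v ∈ H, dist (T u) (T v) ≤ β * dist u v + (1 - β) * infDist v G)
    {u : E} (hu : u ∈ G) :
    dist (T (T u)) (T (T (T u))) ≤ β ^ 2 * dist u (T u) + (1 - β ^ 2) * infDist (T u) G := by
  have hTu := hGH hu
  have h₁ : dist (T (T u)) (T u) ≤ β * dist u (T u) + (1 - β) * infDist (T u) G := by
    rw [dist_comm]; exact hT u hu (T u) hTu
  have h₂ : dist (T (T (T u))) (T (T u)) ≤ β * dist (T (T u)) (T u) + (1 - β) * infDist (T u) G :=
    hT _ (hHG hTu) _ hTu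
  rw [dist_comm]
  nlinarith [mul_le_mul_of_nonneg_left h₁ hβ]

theorem AlmostCyclicContraction.exists_seq_tendsto_dist (hT : AlmostCyclicContraction G H T)
    (hG : G.Nonempty) :
    ∃ (u : ℕ → E) (M : ℝ), (∀ n, u n ∈ G) ∧
      Tendsto (fun n => dist (u n) (T (u n))) atTop (𝓝 M) ∧
      ∀ (φ : ℕ → ℕ) (p : E), Tendsto φ atTop atTop →
        Tendsto (fun k => T (u (φ k))) atTop (𝓝 p) → M ≤ infDist p G := by
  obtain ⟨hGH, hHG, β, hβ0, hβ1, hcon⟩ := hT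
  obtain ⟨x₀, hx₀⟩ := hG
  let u : ℕ → E := fun n => (T ∘ T)^[n] x₀
  have hu : ∀ n, u n ∈ G := fun n => (hHG.comp hGH).iterate n hx₀
  let b : ℕ → ℝ := fun n => dist (u n) (T (u n))
  let σ : ℕ → ℝ := fun n => infDist (T (u n)) G
  have hσb : ∀ n, σ n ≤ b n := fun n => by
    simpa only [σ, b, dist_comm] using infDist_le_dist_of_mem (x := T (u n)) (hu n)
  have hb : ∀ n, b (n + 1) ≤ β ^ 2 * b n + (1 - β ^ 2) * σ n := fun n => by
    simpa only [b, σ, u, Function.iterate_succ_apply', Function.comp_apply] using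
      dist_apply_apply_le_of_almostCyclic hGH hHG hβ0 hcon (hu n)
  have hβ2 : 0 ≤ 1 - β ^ 2 := by nlinarith
  have hanti : Antitone b := antitone_nat_of_succ_le fun n => by
    nlinarith [hb n, mul_le_mul_of_nonneg_left (hσb n) hβ2]
  have hM := tendsto_atTop_ciInf hanti ⟨0, by rintro _ ⟨n, rfl⟩; exact dist_nonneg⟩
  refine ⟨u, _, hu, hM, fun φ p hφ hp => le_of_tendsto_of_succ_le (by nlinarith) hb hM hφ ?_⟩
  exact ((continuous_infDist_pt G).tendsto p).comp hp

end AlmostCyclicContraction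

theorem bestApprox_weaklyContinuous_general {E : Type*} [NormedAddCommGroup E]
    [NormedSpace ℝ E]
    (href : Function.Surjective (NormedSpace.inclusionInDoubleDual ℝ E))
    (G H : Set E) (hG : G.Nonempty)
    (hGwc : IsClosed ((toWeakSpace ℝ E) '' G)) (hHc : IsCompact H)
    (T : E → E) (hT : AlmostCyclicContraction G H T)
    (hTw : ∀ (x : ℕ → E) (x₀ : E), (∀ n, x n ∈ G) → x₀ ∈ G →
      (∀ f : E →L[ℝ] ℝ, Tendsto (fun n => f (x n)) atTop (nhds (f x₀))) →
      (∀ f : E →L[ℝ] ℝ, Tendsto (fun n => f (T (x n))) atTop (nhds (f (T x₀))))) :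
    ∃ u ∈ G, ‖u - T u‖ = Metric.infDist (T u) G := by
  obtain ⟨u, M, huG, hM, hMle⟩ := hT.exists_seq_tendsto_dist hG
  have hTuH : ∀ n, T (u n) ∈ H := fun n => hT.1 (huG n)
  obtain ⟨p, -, φ, hφ, hp⟩ := hHc.tendsto_subseq hTuH
  have hbdd : Bornology.IsBounded (range (u ∘ φ)) :=
    (isBounded_range_of_tendsto_dist (hHc.isBounded.subset (range_subset_iff.2 hTuH)) hM).subset
      (range_comp_subset_range φ u)
  obtain ⟨u₀, ψ, hψ, hweak⟩ := exists_subseq_forall_dual_tendsto href hbdd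
  have hu₀ : u₀ ∈ G := mem_of_forall_dual_tendsto hGwc (fun k => huG _) hweak
  have hpψ : Tendsto (fun k => T (u (φ (ψ k)))) atTop (𝓝 p) := hp.comp hψ.tendsto_atTop
  have hpT : p = T u₀ :=
    eq_of_tendsto_of_forall_dual_tendsto hpψ (hTw _ u₀ (fun k => huG _) hu₀ hweak)
  have hdiff : ∀ f : StrongDual ℝ E,
      Tendsto (fun k => f (u (φ (ψ k)) - T (u (φ (ψ k))))) atTop (𝓝 (f (u₀ - p))) := fun f => by
    simpa only [map_sub, Function.comp_apply] using
      (hweak f).sub ((f.continuous.tendsto p).comp hpψ)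
  have hle : ‖u₀ - p‖ ≤ M := norm_le_of_forall_dual_tendsto hdiff <| by
    simpa only [← dist_eq_norm, Function.comp_def] using hM.comp (hφ.comp hψ).tendsto_atTop
  have hge : infDist p G ≤ ‖u₀ - p‖ := by
    simpa only [dist_eq_norm'] using infDist_le_dist_of_mem (x := p) hu₀
  refine ⟨u₀, hu₀, ?_⟩
  rw [← hpT]
  exact le_antisymm (hle.trans (hMle _ p (hφ.comp hψ).tendsto_atTop hpψ)) hge

/-- Let `G` and `H` be nonempty subsets of a reflexive Banach space (reflexivity: the
canonical inclusion into the double dual is surjective), with `G` weakly closed and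
`H` compact, and let `T` be an almost cyclic contraction on `G ∪ H` that is weakly
sequentially continuous on `G`. Then there is `u ∈ G` with `‖u − Tu‖ = σ(Tu,G)`. -/
theorem bestApprox_weaklyContinuous {E : Type*} [NormedAddCommGroup E]
    [NormedSpace ℝ E] [CompleteSpace E]
    (href : Function.Surjective (NormedSpace.inclusionInDoubleDual ℝ E))
    (G H : Set E) (hG : G.Nonempty) (hH : H.Nonempty)
    (hGwc : IsClosed ((toWeakSpace ℝ E) '' G)) (hHc : IsCompact H)
    (T : E → E) (hT : AlmostCyclicContraction G H T)
    (hTw : ∀ (x : ℕ → E) (x₀ : E), (∀ n, x n ∈ G) → x₀ ∈ G →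
      (∀ f : E →L[ℝ] ℝ, Tendsto (fun n => f (x n)) atTop (nhds (f x₀))) →
      (∀ f : E →L[ℝ] ℝ, Tendsto (fun n => f (T (x n))) atTop (nhds (f (T x₀))))) :
    ∃ u ∈ G, ‖u - T u‖ = Metric.infDist (T u) G :=
  bestApprox_weaklyContinuous_general href G H hG hGwc hHc T hT hTw
end

section
/- Let G and H be two nonempty subsets of a reflexive Banach space E such that G is weakly closed, and let T be an almost cyclic contraction on G ∪ H that has the proximinal property on G ∪ H. Then there exists u ∈ G such that ‖u − Tu‖ = σ(Tu,G). -/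
/-!
Fix `u ∈ G` and put `x k = T^[2k] u`. Since `σ(v, G) ≤ ‖u − v‖` for `u ∈ G`, the contraction
inequality shows that `T` does not expand distances between `G` and `H`, so `‖Tⁿu − Tⁿ⁺¹u‖` decreases,
and it gives `(1 − β)(‖x − Tx‖ − σ(Tx, G)) ≤ ‖x − Tx‖ − ‖Tx − T²x‖` for `x ∈ G`, whose right
side at `x = x k` is a difference of consecutive terms of a convergent sequence; hence
`‖x k − T(x k)‖ − σ(T(x k), G) → 0`. The same inequality bounds `‖u − x (k+1)‖` by
`2‖u − Tu‖ + β‖u − x k‖`, so `(x k)` is bounded. In a reflexive space it has a weakly convergent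
subsequence, whose limit lies in the weakly closed set `G`, and the proximinal property applies.
-/

open Metric Filter Set

/-- `T` has the proximinal property on `G ∪ H`. -/
def ProximinalProperty {E : Type*} [NormedAddCommGroup E] [NormedSpace ℝ E]
    (G H : Set E) (T : E → E) : Prop :=
  (∀ (x : ℕ → E) (x₀ : E), (∀ n, x n ∈ G) → x₀ ∈ G →
    (∀ f : E →L[ℝ] ℝ, Filter.Tendsto (fun n => f (x n)) Filter.atTop (nhds (f x₀))) →
    Filter.Tendsto (fun n => ‖x n - T (x n)‖ - Metric.infDist (T (x n)) G)
      Filter.atTop (nhds 0) →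
    ‖x₀ - T x₀‖ = Metric.infDist (T x₀) G) ∧
  (∀ (y : ℕ → E) (y₀ : E), (∀ n, y n ∈ H) → y₀ ∈ H →
    (∀ f : E →L[ℝ] ℝ, Filter.Tendsto (fun n => f (y n)) Filter.atTop (nhds (f y₀))) →
    Filter.Tendsto (fun n => ‖y n - T (y n)‖ - Metric.infDist (T (y n)) H)
      Filter.atTop (nhds 0) →
    ‖y₀ - T y₀‖ = Metric.infDist (T y₀) H)

open Topology

theorem IsCompact.isSeqCompact_of_separating {X ι : Type*} [TopologicalSpace X] [Countable ι]
    {Y : ι → Type*} [∀ i, MetricSpace (Y i)] (f : ∀ i, X → Y i) (hf : ∀ i, Continuous (f i))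
    {K : Set X} (hK : IsCompact K) (hsep : K.Pairwise fun x y => ∃ i, f i x ≠ f i y) :
    IsSeqCompact K := by
  have := Encodable.ofCountable ι
  have := isCompact_iff_compactSpace.mp hK
  have : TopologicalSpace.MetrizableSpace K :=
    Metric.PiNatEmbed.TopologicalSpace.MetrizableSpace.of_countable_separating
      (fun i (x : K) => f i x) (fun i => (hf i).comp continuous_subtype_val)
      fun x y hxy => hsep x.2 y.2 (Subtype.coe_injective.ne hxy)
  exact isSeqCompact_iff_seqCompactSpace.2 inferInstance

theorem exists_dual_family_eq_zero_imp_eq_zero_of_mem_closure {𝕜 E : Type*} [RCLike 𝕜]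
    [NormedAddCommGroup E] [NormedSpace 𝕜 E] (c : Set E) :
    ∃ g : c → StrongDual 𝕜 E, ∀ z ∈ closure c, (∀ d, g d z = 0) → z = 0 := by
  choose g hg_norm hg_apply using fun d : c => exists_dual_vector'' 𝕜 (d : E)
  refine ⟨g, fun z hz hgz => norm_le_zero_iff.1 ?_⟩
  have hd : ∀ d : c, ‖(d : E)‖ ≤ ‖(d : E) - z‖ := fun d => by
    calc ‖(d : E)‖ = ‖g d ((d : E) - z)‖ := by simp [hg_apply, hgz]
      _ ≤ ‖g d‖ * ‖(d : E) - z‖ := (g d).le_opNorm _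
      _ ≤ ‖(d : E) - z‖ := mul_le_of_le_one_left (norm_nonneg _) (hg_norm d)
  refine le_of_forall_pos_le_add fun ε hε => ?_
  obtain ⟨d, hdc, hzd⟩ := Metric.mem_closure_iff.1 hz (ε / 2) (half_pos hε)
  have := hd ⟨d, hdc⟩
  rw [dist_eq_norm] at hzd
  calc ‖z‖ ≤ ‖z - d‖ + ‖d‖ := norm_le_norm_sub_add z d
    _ ≤ 0 + ε := by simp only [norm_sub_rev d z] at this; linarith

/-- Weak sequential compactness of bounded sets in a reflexive space: the weak closure of the
sequence is weakly compact (Banach–Alaoglu in the bidual), and it lies in the separable closed span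
of the sequence, on which countably many functionals separate points, so it is metrizable. -/
theorem exists_subseq_tendsto_weakSpace {E : Type*} [NormedAddCommGroup E] [NormedSpace ℝ E]
    (href : Function.Surjective (NormedSpace.inclusionInDoubleDual ℝ E)) {x : ℕ → E}
    (hx : Bornology.IsBounded (range x)) :
    ∃ a : E, ∃ φ : ℕ → ℕ, StrictMono φ ∧
      Tendsto (fun k => toWeakSpace ℝ E (x (φ k))) atTop (𝓝 (toWeakSpace ℝ E a)) := by
  set F := (Submodule.span ℝ (range x)).topologicalClosure
  obtain ⟨c, hc, hFc⟩ : TopologicalSpace.IsSeparable (F : Set E) := by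
    rw [Submodule.topologicalClosure_coe]
    exact (countable_range x).isSeparable.span.closure
  have : Countable c := hc.to_subtype
  obtain ⟨g, hg⟩ := exists_dual_family_eq_zero_imp_eq_zero_of_mem_closure (𝕜 := ℝ) c
  set K := closure (toWeakSpace ℝ E '' range x)
  have hK : IsCompact K := by
    refine NormedSpace.isCompact_closure_of_isBounded ℝ E _
      (by rwa [(toWeakSpace ℝ E).injective.preimage_image]) ?_
    rintro Φ -
    obtain ⟨a, ha⟩ := href (StrongDual.toWeakDual.symm Φ)
    exact ⟨toWeakSpace ℝ E a, by rw [← StrongDual.toWeakDual.apply_symm_apply Φ, ← ha]; rfl⟩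
  have hKF : K ⊆ toWeakSpace ℝ E '' F :=
    calc K ⊆ closure (toWeakSpace ℝ E '' F) :=
          closure_mono (image_mono (Submodule.subset_span.trans (Submodule.le_topologicalClosure _)))
      _ = toWeakSpace ℝ E '' closure F := (F.convex.toWeakSpace_closure ℝ).symm
      _ = toWeakSpace ℝ E '' F := by rw [(Submodule.isClosed_topologicalClosure _).closure_eq]
  have hseq : IsSeqCompact K := by
    refine hK.isSeqCompact_of_separating (fun d w => g d ((toWeakSpace ℝ E).symm w))
      (fun d => WeakBilin.eval_continuous (topDualPairing ℝ E).flip (g d)) ?_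
    intro w₁ hw₁ w₂ hw₂ hne
    by_contra! heq
    obtain ⟨y₁, hy₁, rfl⟩ := hKF hw₁
    obtain ⟨y₂, hy₂, rfl⟩ := hKF hw₂
    refine hne (congrArg _ (sub_eq_zero.1 (hg _ (hFc (F.sub_mem hy₁ hy₂)) fun d => ?_)))
    simpa [sub_eq_zero] using heq d
  obtain ⟨w, -, φ, hφ, hlim⟩ :=
    hseq fun k => subset_closure (mem_image_of_mem _ (mem_range_self k))
  exact ⟨(toWeakSpace ℝ E).symm w, φ, hφ, by rwa [LinearEquiv.apply_symm_apply]⟩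

namespace AlmostCyclicContraction

variable {E : Type*} [MetricSpace E] {G H : Set E} {T : E → E} {u v : E}

theorem dist_map_le (hT : AlmostCyclicContraction G H T) (hu : u ∈ G) (hv : v ∈ H) :
    dist (T u) (T v) ≤ dist u v := by
  obtain ⟨-, -, β, -, hβ1, hcontr⟩ := hT
  have hσ : infDist v G ≤ dist u v := dist_comm v u ▸ infDist_le_dist_of_mem hu
  nlinarith [hcontr u hu v hv]

theorem iterate_two_mul_mem (hT : AlmostCyclicContraction G H T) (hu : u ∈ G) (k : ℕ) :
    T^[2 * k] u ∈ G := by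
  rw [Function.iterate_mul]
  exact (hT.2.1.comp hT.1).iterate k hu

theorem map_iterate_two_mul_mem (hT : AlmostCyclicContraction G H T) (hu : u ∈ G) (k : ℕ) :
    T (T^[2 * k] u) ∈ H :=
  hT.1 (hT.iterate_two_mul_mem hu k)

theorem antitone_dist_iterate (hT : AlmostCyclicContraction G H T) (hu : u ∈ G) :
    Antitone fun n => dist (T^[n] u) (T (T^[n] u)) := by
  refine antitone_nat_of_succ_le fun n => ?_
  obtain ⟨k, rfl | rfl⟩ := Nat.even_or_odd' n
  · rw [Function.iterate_succ_apply']
    exact hT.dist_map_le (hT.iterate_two_mul_mem hu k) (hT.map_iterate_two_mul_mem hu k)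
  · have hG : T (T^[2 * k + 1] u) ∈ G := by
      rw [← Function.iterate_succ_apply' T]
      exact hT.iterate_two_mul_mem hu (k + 1)
    have hH : T^[2 * k + 1] u ∈ H := by
      rw [Function.iterate_succ_apply']
      exact hT.map_iterate_two_mul_mem hu k
    rw [Function.iterate_succ_apply', dist_comm, dist_comm (T^[2 * k + 1] u)]
    exact hT.dist_map_le hG hH

theorem tendsto_dist_sub_infDist (hT : AlmostCyclicContraction G H T) (hu : u ∈ G) :
    Tendsto (fun k => dist (T^[2 * k] u) (T (T^[2 * k] u)) - infDist (T (T^[2 * k] u)) G)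
      atTop (𝓝 0) := by
  obtain ⟨β, -, hβ1, hcontr⟩ := hT.2.2
  set d : ℕ → ℝ := fun n => dist (T^[n] u) (T (T^[n] u))
  have hd : Tendsto (fun n => d n - d (n + 1)) atTop (𝓝 0) := by
    have hL : Tendsto d atTop (𝓝 (⨅ n, d n)) := tendsto_atTop_ciInf
      (hT.antitone_dist_iterate hu) ⟨0, forall_mem_range.2 fun n => dist_nonneg⟩
    rw [← sub_self (⨅ n, d n)]
    exact hL.sub (hL.comp (tendsto_add_atTop_nat 1))
  have hdecay : ∀ k, (1 - β) * (dist (T^[2 * k] u) (T (T^[2 * k] u)) -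
      infDist (T (T^[2 * k] u)) G) ≤ d (2 * k) - d (2 * k + 1) := fun k => by
    have h := hcontr _ (hT.iterate_two_mul_mem hu k) _ (hT.map_iterate_two_mul_mem hu k)
    simp only [d, Function.iterate_succ_apply']
    linarith
  refine squeeze_zero (fun k => sub_nonneg.2 ?_)
    (fun k => (le_div_iff₀' (sub_pos.2 hβ1)).2 (hdecay k))
    (by simpa using (hd.comp (strictMono_mul_left_of_pos two_pos).tendsto_atTop).div_const (1 - β))
  exact dist_comm (T^[2 * k] u) _ ▸ infDist_le_dist_of_mem (hT.iterate_two_mul_mem hu k)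

theorem isBounded_range_iterate_two_mul (hT : AlmostCyclicContraction G H T) (hu : u ∈ G) :
    Bornology.IsBounded (range fun k => T^[2 * k] u) := by
  obtain ⟨β, hβ0, hβ1, hcontr⟩ := hT.2.2
  set R := 2 * dist u (T u) / (1 - β)
  have hR : 2 * dist u (T u) + β * R = R := by
    simp only [R]
    field_simp [(sub_pos.2 hβ1).ne']
    ring
  have hbound : ∀ k, dist u (T^[2 * k] u) ≤ R := by
    intro k
    induction k with
    | zero => simpa using div_nonneg (mul_nonneg zero_le_two dist_nonneg) (sub_pos.2 hβ1).le
    | succ k ih =>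
      set a := T^[2 * k] u
      have hstep : dist a (T a) ≤ dist u (T u) := hT.antitone_dist_iterate hu (Nat.zero_le (2 * k))
      have hσ : infDist (T a) G ≤ dist a (T a) :=
        dist_comm a _ ▸ infDist_le_dist_of_mem (hT.iterate_two_mul_mem hu k)
      have hcon := hcontr u hu (T a) (hT.map_iterate_two_mul_mem hu k)
      have htri := dist_triangle u a (T a)
      have hiter : T^[2 * (k + 1)] u = T (T a) := by
        rw [show 2 * (k + 1) = 2 * k + 1 + 1 by ring, Function.iterate_succ_apply',
          Function.iterate_succ_apply']
      calc dist u (T^[2 * (k + 1)] u) ≤ dist u (T u) + dist (T u) (T (T a)) := by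
            rw [hiter]; exact dist_triangle _ _ _
        _ ≤ 2 * dist u (T u) + β * dist u a := by nlinarith
        _ ≤ R := by nlinarith
  exact isBounded_closedBall.subset (range_subset_iff.2 fun k => mem_closedBall'.2 (hbound k))

end AlmostCyclicContraction

theorem bestApprox_proximinalProperty_general {E : Type*} [NormedAddCommGroup E]
    [NormedSpace ℝ E]
    (href : Function.Surjective (NormedSpace.inclusionInDoubleDual ℝ E))
    (G H : Set E) (hG : G.Nonempty)
    (hGwc : IsClosed ((toWeakSpace ℝ E) '' G))
    (T : E → E) (hT : AlmostCyclicContraction G H T)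
    (hprox : ProximinalProperty G H T) :
    ∃ u ∈ G, ‖u - T u‖ = Metric.infDist (T u) G := by
  obtain ⟨u, hu⟩ := hG
  obtain ⟨a, φ, hφ, hlim⟩ :=
    exists_subseq_tendsto_weakSpace href (hT.isBounded_range_iterate_two_mul hu)
  have hxG : ∀ k, T^[2 * φ k] u ∈ G := fun k => hT.iterate_two_mul_mem hu (φ k)
  have haG : a ∈ G := (toWeakSpace ℝ E).injective.mem_set_image.1 <|
    hGwc.mem_of_tendsto hlim (Eventually.of_forall fun k => mem_image_of_mem _ (hxG k))
  refine ⟨a, haG, hprox.1 _ a hxG haG (fun f => ?_) ?_⟩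
  · exact ((WeakBilin.eval_continuous (topDualPairing ℝ E).flip f).tendsto _).comp hlim
  · simpa only [dist_eq_norm, Function.comp_def] using
      (hT.tendsto_dist_sub_infDist hu).comp hφ.tendsto_atTop

/-- Let `G` and `H` be nonempty subsets of a reflexive Banach space (reflexivity: the
canonical inclusion into the double dual is surjective), with `G` weakly closed, and
let `T` be an almost cyclic contraction on `G ∪ H` having the proximinal property.
Then there is `u ∈ G` with `‖u − Tu‖ = σ(Tu,G)`. -/
theorem bestApprox_proximinalProperty {E : Type*} [NormedAddCommGroup E]
    [NormedSpace ℝ E] [CompleteSpace E]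
    (href : Function.Surjective (NormedSpace.inclusionInDoubleDual ℝ E))
    (G H : Set E) (hG : G.Nonempty) (hH : H.Nonempty)
    (hGwc : IsClosed ((toWeakSpace ℝ E) '' G))
    (T : E → E) (hT : AlmostCyclicContraction G H T)
    (hprox : ProximinalProperty G H T) :
    ∃ u ∈ G, ‖u - T u‖ = Metric.infDist (T u) G :=
  bestApprox_proximinalProperty_general href G H hG hGwc T hT hprox
end
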